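/- arXiv:2311.01820 — 7 statements merged into one kernel-verified Lean document; each statement's English description precedes it below -/
import Mathlib

section
/- Let G be a context-free grammar, let r : A → α be a rule of G with α = α₁α₂ a factorization of its right-hand side, and let A' be a fresh symbol not among the nonterminals of G. Let G' be the grammar obtained from G by removing the rule r and adding a fresh nonterminal A' together with the two rules A → α₁A' and A' → α₂. Then for every nonterminal X of G, the set of terminal strings derivable from X in G equals the set of terminal strings derivable from X in G'; in particular L(G) = L(G'). -/
/-- One-step rewriting for a set of context-free rules: replace one occurrence of a
nonterminal `A` by the right-hand side of one of its rules. -/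
def CFGProduces {N T : Type} (rules : Set (N × List (N ⊕ T)))
    (u v : List (N ⊕ T)) : Prop :=
  ∃ (A : N) (α p s : List (N ⊕ T)),
    (A, α) ∈ rules ∧ u = p ++ Sum.inl A :: s ∧ v = p ++ α ++ s

/-- The derivation relation `⇒*`: reflexive-transitive closure of one-step rewriting. -/
def CFGDerives {N T : Type} (rules : Set (N × List (N ⊕ T))) :
    List (N ⊕ T) → List (N ⊕ T) → Prop :=
  Relation.ReflTransGen (CFGProduces rules)

/-- A context-free grammar with nonterminal type `N` and terminal type `T`;
its (finitely many, in applications) rules are collected in the set `rules`. -/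
structure CFG (N T : Type) where
  start : N
  rules : Set (N × List (N ⊕ T))

namespace CFG

variable {N T : Type}

def Derives (G : CFG N T) : List (N ⊕ T) → List (N ⊕ T) → Prop :=
  CFGDerives G.rules

/-- The set of terminal strings derivable from the nonterminal `X` in `G`. -/
def DerivableFrom (G : CFG N T) (X : N) : Set (List T) :=
  {w : List T | G.Derives [Sum.inl X] (w.map Sum.inr)}

/-- The language of `G`: terminal strings derivable from the start symbol. -/
def language (G : CFG N T) : Set (List T) :=
  G.DerivableFrom G.start

/-- `A` is among the nonterminals of `G`: it is the start symbol, the producer of a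
rule, or occurs in the right-hand side of a rule. -/
def IsNonterminalOf (G : CFG N T) (A : N) : Prop :=
  A = G.start ∨ ∃ r ∈ G.rules, r.1 = A ∨ Sum.inl A ∈ r.2

end CFG


section Aux

variable {N T : Type}

open Classical in
noncomputable def substA (A' : N) (α₂ : List (N ⊕ T)) : List (N ⊕ T) → List (N ⊕ T)
  | [] => []
  | Sum.inl B :: rest => (if B = A' then α₂ else [Sum.inl B]) ++ substA A' α₂ rest
  | Sum.inr t :: rest => Sum.inr t :: substA A' α₂ rest

lemma substA_append (A' : N) (α₂ u v : List (N ⊕ T)) :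
    substA A' α₂ (u ++ v) = substA A' α₂ u ++ substA A' α₂ v := by
  induction u with
  | nil => simp [substA]
  | cons x xs ih => cases x <;> simp [substA, ih]

lemma substA_of_not_mem (A' : N) (α₂ : List (N ⊕ T)) {β : List (N ⊕ T)}
    (h : Sum.inl A' ∉ β) : substA A' α₂ β = β := by
  induction β with
  | nil => rfl
  | cons x xs ih =>
    have hxs : Sum.inl A' ∉ xs := fun hm => h (List.mem_cons_of_mem _ hm)
    cases x with
    | inl B =>
      have hB : B ≠ A' := fun hBe => h (by simp [hBe])
      simp [substA, hB, ih hxs]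
    | inr t => simp [substA, ih hxs]

lemma substA_map_inr (A' : N) (α₂ : List (N ⊕ T)) (w : List T) :
    substA A' α₂ (w.map Sum.inr) = w.map Sum.inr := by
  apply substA_of_not_mem; simp

lemma substA_inl_self (A' : N) (α₂ : List (N ⊕ T)) :
    substA A' α₂ [Sum.inl A'] = α₂ := by
  simp [substA]

end Aux

/-- splitting a rule `A → α₁α₂` into `A → α₁A'` and `A' → α₂` with a
fresh nonterminal `A'` changes neither the strings derivable from any nonterminal of
`G` nor the language. -/
theorem stmt0 {N T : Type} (G : CFG N T) (A A' : N) (α₁ α₂ : List (N ⊕ T))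
    (hr : (A, α₁ ++ α₂) ∈ G.rules)
    (hfresh : ¬ G.IsNonterminalOf A')
    (G' : CFG N T)
    (hG' : G' = ⟨G.start,
      (G.rules \ {(A, α₁ ++ α₂)}) ∪ {(A, α₁ ++ [Sum.inl A']), (A', α₂)}⟩) :
    (∀ X : N, G.IsNonterminalOf X → G.DerivableFrom X = G'.DerivableFrom X) ∧
      G.language = G'.language := by
  subst hG'
  have hns : A' ≠ G.start := fun h => hfresh (Or.inl h)
  have hlhs : ∀ r ∈ G.rules, r.1 ≠ A' := fun r hrm he =>
    hfresh (Or.inr ⟨r, hrm, Or.inl he⟩)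
  have hrhs : ∀ r ∈ G.rules, Sum.inl A' ∉ r.2 := fun r hrm he =>
    hfresh (Or.inr ⟨r, hrm, Or.inr he⟩)
  set R' : Set (N × List (N ⊕ T)) :=
    (G.rules \ {(A, α₁ ++ α₂)}) ∪ {(A, α₁ ++ [Sum.inl A']), (A', α₂)} with hR'
  -- forward direction: a G-step is simulated by G'-steps
  have fwd : ∀ u v, CFGProduces G.rules u v → CFGDerives R' u v := by
    rintro u v ⟨B, β, p, s, hmem, hu, hv⟩
    by_cases hcase : (B, β) = (A, α₁ ++ α₂)
    · rw [Prod.mk.injEq] at hcase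
      obtain ⟨hB, hβ⟩ := hcase
      subst hB; subst hβ
      have step1 : CFGProduces R' u (p ++ (α₁ ++ [Sum.inl A']) ++ s) :=
        ⟨B, α₁ ++ [Sum.inl A'], p, s, Or.inr (Or.inl rfl), hu, rfl⟩
      have step2 : CFGProduces R' (p ++ (α₁ ++ [Sum.inl A']) ++ s) v := by
        refine ⟨A', α₂, p ++ α₁, s, Or.inr (Or.inr rfl), by simp, ?_⟩
        rw [hv]; simp
      exact (Relation.ReflTransGen.single step1).tail step2
    · exact Relation.ReflTransGen.single
        ⟨B, β, p, s, Or.inl ⟨hmem, hcase⟩, hu, hv⟩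
  have fwdD : ∀ u v, CFGDerives G.rules u v → CFGDerives R' u v := by
    intro u v h
    induction h with
    | refl => exact Relation.ReflTransGen.refl
    | tail _ hstep ih => exact ih.trans (fwd _ _ hstep)
  -- backward direction via the substitution A' ↦ α₂
  have bwd : ∀ u v, CFGProduces R' u v →
      CFGDerives G.rules (substA A' α₂ u) (substA A' α₂ v) := by
    rintro u v ⟨B, β, p, s, hmem, hu, hv⟩
    have hpu : substA A' α₂ u
        = substA A' α₂ p ++ substA A' α₂ [Sum.inl B] ++ substA A' α₂ s := by
      rw [hu, show p ++ Sum.inl B :: s = p ++ [Sum.inl B] ++ s by simp,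
        substA_append, substA_append]
    have hpv : substA A' α₂ v
        = substA A' α₂ p ++ substA A' α₂ β ++ substA A' α₂ s := by
      rw [hv, substA_append, substA_append]
    simp only [hR', Set.mem_union, Set.mem_diff, Set.mem_insert_iff,
      Set.mem_singleton_iff, Prod.mk.injEq] at hmem
    rcases hmem with ⟨hmem, _⟩ | ⟨rfl, rfl⟩ | ⟨rfl, rfl⟩
    · -- an old rule of G, unchanged by the substitution
      have hBne : B ≠ A' := hlhs _ hmem
      have hβ : substA A' α₂ β = β := substA_of_not_mem _ _ (hrhs _ hmem)
      have hBl : substA A' α₂ [Sum.inl B] = [Sum.inl B] := by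
        apply substA_of_not_mem; simp [Ne.symm hBne]
      exact Relation.ReflTransGen.single
        ⟨B, β, substA A' α₂ p, substA A' α₂ s, hmem,
          by rw [hpu, hBl]; simp, by rw [hpv, hβ]⟩
    · -- the rule A → α₁ A'  (here A has been renamed to B by the subst)
      have hAne : B ≠ A' := hlhs _ hr
      have hα₁ : substA A' α₂ α₁ = α₁ := by
        apply substA_of_not_mem
        intro hm; exact hrhs _ hr (by simpa using Or.inl hm)
      have hBl : substA A' α₂ [Sum.inl B] = [Sum.inl B] := by
        apply substA_of_not_mem; simp [Ne.symm hAne]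
      refine Relation.ReflTransGen.single
        ⟨B, α₁ ++ α₂, substA A' α₂ p, substA A' α₂ s, hr,
          by rw [hpu, hBl]; simp, ?_⟩
      rw [hpv, substA_append, hα₁, substA_inl_self]
    · -- the rule A' → α₂ : the substitution makes this a no-op
      -- (here A' has been renamed to B and α₂ to β by the subst)
      have hβ2 : substA B β β = β := by
        apply substA_of_not_mem
        intro hm; exact hrhs _ hr (by simpa using Or.inr hm)
      have heq : substA B β u = substA B β v := by
        rw [hpu, hpv, substA_inl_self, hβ2]
      rw [heq]
      exact Relation.ReflTransGen.refl
  have bwdD : ∀ u v, CFGDerives R' u v →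
      CFGDerives G.rules (substA A' α₂ u) (substA A' α₂ v) := by
    intro u v h
    induction h with
    | refl => exact Relation.ReflTransGen.refl
    | tail _ hstep ih => exact ih.trans (bwd _ _ hstep)
  have main : ∀ X : N, X ≠ A' →
      CFG.DerivableFrom G X = CFG.DerivableFrom ⟨G.start, R'⟩ X := by
    intro X hX
    ext w
    constructor
    · exact fun h => fwdD _ _ h
    · intro h
      have := bwdD _ _ h
      rwa [substA_map_inr,
        substA_of_not_mem _ _ (by simp [Ne.symm hX])] at this
  constructor
  · intro X hXnt
    exact main X (fun h => hfresh (h ▸ hXnt))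
  · exact main G.start (Ne.symm hns)
end

section
/- Let G be a context-free grammar, let r : A → α with α = α₁α₂ be a rule of G, let A' be fresh, and let G' be obtained from G by removing r and adding the rules A → α₁A' and A' → α₂. Since A' occurs in exactly one right-hand side of G' (namely in A → α₁A') and has exactly one production (namely A' → α₂), every derivation in G' of a terminal string from the start symbol that applies the rule A' → α₂ must have introduced that occurrence of A' by an application of the rule A → α₁A'; consequently every terminal string derivable in G' is derivable in G, i.e. L(G') ⊆ L(G). -/
open scoped Classical in
/-- Substitute `α₂` for each occurrence of `A'`, leave other symbols alone. -/
noncomputable def substSym {N T : Type} (A' : N) (α₂ : List (N ⊕ T)) (x : N ⊕ T) :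
    List (N ⊕ T) :=
  if x = Sum.inl A' then α₂ else [x]

lemma substSym_of_ne {N T : Type} (A' : N) (α₂ : List (N ⊕ T)) {x : N ⊕ T}
    (h : x ≠ Sum.inl A') : substSym A' α₂ x = [x] := by
  simp [substSym, h]

lemma flatMap_subst_of_not_mem {N T : Type} (A' : N) (α₂ : List (N ⊕ T))
    {u : List (N ⊕ T)} (h : Sum.inl A' ∉ u) :
    u.flatMap (substSym A' α₂) = u := by
  induction u with
  | nil => simp
  | cons a l ih =>
    simp only [List.mem_cons, not_or] at h
    simp [List.flatMap_cons, substSym_of_ne A' α₂ (Ne.symm h.1), ih h.2]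

/-- with `A'` fresh, removing `A → α₁α₂` and adding `A → α₁A'` and
`A' → α₂` yields a grammar whose language is contained in that of `G`. -/
theorem stmt1 {N T : Type} (G : CFG N T) (A A' : N) (α₁ α₂ : List (N ⊕ T))
    (hr : (A, α₁ ++ α₂) ∈ G.rules)
    (hfresh : ¬ G.IsNonterminalOf A')
    (G' : CFG N T)
    (hG' : G' = ⟨G.start,
      (G.rules \ {(A, α₁ ++ α₂)}) ∪ {(A, α₁ ++ [Sum.inl A']), (A', α₂)}⟩) :
    G'.language ⊆ G.language := by
  unfold CFG.IsNonterminalOf at hfresh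
  push_neg at hfresh
  obtain ⟨hstart, hfr⟩ := hfresh
  set φ : List (N ⊕ T) → List (N ⊕ T) := fun u => u.flatMap (substSym A' α₂) with hφ
  have hφapp : ∀ u v, φ (u ++ v) = φ u ++ φ v := by
    intro u v; simp [hφ]
  have hφcons : ∀ (X : N), X ≠ A' → ∀ p s, φ (p ++ Sum.inl X :: s) = φ p ++ Sum.inl X :: φ s := by
    intro X hX p s
    simp [hφ, List.flatMap_append, List.flatMap_cons,
      substSym_of_ne A' α₂ (show (Sum.inl X : N ⊕ T) ≠ Sum.inl A' by simp [hX])]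
  have hA'ne : A' ≠ A := by
    intro h; exact (hfr (A, α₁ ++ α₂) hr).1 h.symm
  have hα₁ : Sum.inl A' ∉ α₁ := by
    intro h; exact (hfr (A, α₁ ++ α₂) hr).2 (List.mem_append.2 (Or.inl h))
  have hα₂ : Sum.inl A' ∉ α₂ := by
    intro h; exact (hfr (A, α₁ ++ α₂) hr).2 (List.mem_append.2 (Or.inr h))
  have hφα₂ : φ α₂ = α₂ := flatMap_subst_of_not_mem A' α₂ hα₂
  have hφα₁ : φ α₁ = α₁ := flatMap_subst_of_not_mem A' α₂ hα₁
  have hφA' : φ [Sum.inl A'] = α₂ := by simp [hφ, substSym]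
  have step : ∀ u v, CFGProduces G'.rules u v → CFGDerives G.rules (φ u) (φ v) := by
    intro u v ⟨B, β, p, s, hmem, hu, hv⟩
    rw [hG'] at hmem
    rcases hmem with ⟨hmem, hne⟩ | hmem
    · -- old rule
      have hB : B ≠ A' := fun h => (hfr (B, β) hmem).1 (by simpa using h)
      have hφβ : φ β = β := flatMap_subst_of_not_mem A' α₂ (hfr (B, β) hmem).2
      refine Relation.ReflTransGen.single ⟨B, β, φ p, φ s, hmem, ?_, ?_⟩
      · rw [hu, hφcons B hB]
      · rw [hv, hφapp, hφapp, hφβ]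
    · rcases hmem with hmem | hmem
      · -- new rule A → α₁ A'
        obtain ⟨hB, hβ⟩ : B = A ∧ β = α₁ ++ [Sum.inl A'] := by
          simpa [Prod.ext_iff] using hmem
        rw [hB] at hu
        rw [hβ] at hv
        refine Relation.ReflTransGen.single ⟨A, α₁ ++ α₂, φ p, φ s, hr, ?_, ?_⟩
        · rw [hu, hφcons A (Ne.symm hA'ne)]
        · rw [hv, hφapp, hφapp, hφapp, hφα₁, hφA', List.append_assoc]
      · -- new rule A' → α₂
        obtain ⟨hB, hβ⟩ : B = A' ∧ β = α₂ := by
          simpa [Prod.ext_iff] using hmem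
        rw [hB] at hu
        rw [hβ] at hv
        have heq : φ u = φ v := by
          rw [hu, hv, show p ++ Sum.inl A' :: s = p ++ [Sum.inl A'] ++ s by simp,
            hφapp, hφapp, hφapp, hφapp, hφA', hφα₂]
        rw [heq]
        exact Relation.ReflTransGen.refl
  have lift : ∀ u v, CFGDerives G'.rules u v → CFGDerives G.rules (φ u) (φ v) := by
    intro u v h
    induction h with
    | refl => exact Relation.ReflTransGen.refl
    | tail _ h ih => exact ih.trans (step _ _ h)
  intro w hw
  have hw' : CFGDerives G'.rules [Sum.inl G.start] (w.map Sum.inr) := by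
    have h := hw
    simp only [CFG.language, CFG.DerivableFrom, Set.mem_setOf_eq, CFG.Derives] at h
    rwa [show G'.start = G.start by rw [hG']] at h
  have h1 : φ [Sum.inl G.start] = [Sum.inl G.start] :=
    flatMap_subst_of_not_mem A' α₂ (by simpa using hstart)
  have h2 : φ (w.map Sum.inr) = w.map Sum.inr :=
    flatMap_subst_of_not_mem A' α₂ (by simp)
  have := lift _ _ hw'
  rw [h1, h2] at this
  exact this
end

section
/- (Theorem 2.) Let I be a CFG with categories produced by Instructions 1–4 (so that every rule is right-free, left-restricted, two-handed free, or terminal) and let G be the minimalist grammar constructed from I by Instructions 5–8. Then every terminal expression generatable by I is a legal expression of G, i.e. L(I) ⊆ L(G). -/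
/-! ### Minimalist grammars (Stabler 1997) -/

/-- Syntactic features of a minimalist grammar over categories `C` and
licensee/licensor names `L`: selectors `=c`, categories `c`, licensors `+x`,
licensees `−x`. -/
inductive Feature (C L : Type) : Type where
  | sel : C → Feature C L
  | cat : C → Feature C L
  | pos : L → Feature C L
  | neg : L → Feature C L

/-- An MG item `⟨exp :: feats⟩` (lexical, `isLex = true`) or `⟨exp : feats⟩`
(derived, `isLex = false`). -/
structure MGItem (T C L : Type) : Type where
  exp : List T
  isLex : Bool
  feats : List (Feature C L)

/-- An MG expression: a chain consisting of a head item and a list of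
non-finally merged items. -/
abbrev MGExpr (T C L : Type) : Type := MGItem T C L × List (MGItem T C L)

/-- The merge operations: `MergeStep merger mergee output`. -/
inductive MergeStep {T C L : Type} :
    MGExpr T C L → MGExpr T C L → MGExpr T C L → Prop where
  | merge1 (e₁ e₂ : List T) (f : C) (t : List (Feature C L)) (b : Bool)
      (q : List (MGItem T C L)) :
      MergeStep (⟨e₁, true, Feature.sel f :: t⟩, [])
        (⟨e₂, b, [Feature.cat f]⟩, q)
        (⟨e₁ ++ e₂, false, t⟩, q)
  | merge2 (e₁ e₂ : List T) (f : C) (t : List (Feature C L)) (b : Bool)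
      (q₁ q₂ : List (MGItem T C L)) :
      MergeStep (⟨e₁, false, Feature.sel f :: t⟩, q₁)
        (⟨e₂, b, [Feature.cat f]⟩, q₂)
        (⟨e₂ ++ e₁, false, t⟩, q₁ ++ q₂)
  | merge3 (e₁ e₂ : List T) (f : C) (t₁ t₂ : List (Feature C L)) (b₁ b₂ : Bool)
      (q₁ q₂ : List (MGItem T C L)) (ht₂ : t₂ ≠ []) :
      MergeStep (⟨e₁, b₁, Feature.sel f :: t₁⟩, q₁)
        (⟨e₂, b₂, Feature.cat f :: t₂⟩, q₂)
        (⟨e₁, false, t₁⟩, q₁ ++ ⟨e₂, false, t₂⟩ :: q₂)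

/-- The move operations: `MoveStep input output`. -/
inductive MoveStep {T C L : Type} : MGExpr T C L → MGExpr T C L → Prop where
  | move1 (e₁ e₂ : List T) (f : L) (t : List (Feature C L)) (b : Bool)
      (q₁ q₂ : List (MGItem T C L)) :
      MoveStep (⟨e₁, false, Feature.pos f :: t⟩, q₁ ++ ⟨e₂, b, [Feature.neg f]⟩ :: q₂)
        (⟨e₂ ++ e₁, false, t⟩, q₁ ++ q₂)
  | move2 (e₁ e₂ : List T) (f : L) (t t₂ : List (Feature C L)) (b : Bool)
      (q₁ q₂ : List (MGItem T C L)) (ht₂ : t₂ ≠ []) :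
      MoveStep (⟨e₁, false, Feature.pos f :: t⟩, q₁ ++ ⟨e₂, b, Feature.neg f :: t₂⟩ :: q₂)
        (⟨e₁, false, t⟩, q₁ ++ ⟨e₂, false, t₂⟩ :: q₂)

/-- Derivability of an expression from a lexicon `lex` by merge and move. -/
inductive MGDeriv {T C L : Type} (lex : Set (MGItem T C L)) : MGExpr T C L → Prop where
  | ax {i : MGItem T C L} : i ∈ lex → MGDeriv lex (i, [])
  | merge {A B F : MGExpr T C L} :
      MGDeriv lex A → MGDeriv lex B → MergeStep A B F → MGDeriv lex F
  | move {A F : MGExpr T C L} : MGDeriv lex A → MoveStep A F → MGDeriv lex F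

/-- `E` is a premise of one application of a structure-building operation with
output `F` (all other premises being derivable from `lex`). -/
def StepOf {T C L : Type} (lex : Set (MGItem T C L)) (E F : MGExpr T C L) : Prop :=
  (∃ B, MGDeriv lex B ∧ MergeStep E B F) ∨
  (∃ A, MGDeriv lex A ∧ MergeStep A E F) ∨
  MoveStep E F

/-- `F` is derived from `E` (possibly in several steps, `E` an ancestor of `F` in a
derivation tree). -/
def DerivedFrom {T C L : Type} (lex : Set (MGItem T C L)) (E F : MGExpr T C L) : Prop :=
  Relation.ReflTransGen (StepOf lex) E F

/-- `E` is part of (the construction of) a legal derivation tree: `E` is derivable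
and some single item of category `CFin` can be derived from it. -/
def InLegalTree {T C L : Type} (lex : Set (MGItem T C L)) (CFin : C)
    (E : MGExpr T C L) : Prop :=
  MGDeriv lex E ∧
    ∃ (e : List T) (b : Bool), DerivedFrom lex E (⟨e, b, [Feature.cat CFin]⟩, [])

/-- The language of the MG with lexicon `lex` and top category `CFin`:
exponents of legal expressions. -/
def MGLanguage {T C L : Type} (lex : Set (MGItem T C L)) (CFin : C) : Set (List T) :=
  {e : List T | ∃ b : Bool, MGDeriv lex (⟨e, b, [Feature.cat CFin]⟩, [])}

/-- The merge of the item `f` (merger, with chain `qf`) with the item `x` (mergee,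
with chain `qx`) is part of the construction of a legal derivation tree. -/
def MergesInLegal {T C L : Type} (lex : Set (MGItem T C L)) (CFin : C)
    (f x : MGItem T C L) : Prop :=
  ∃ (qf qx : List (MGItem T C L)) (F : MGExpr T C L),
    MGDeriv lex (f, qf) ∧ MGDeriv lex (x, qx) ∧
    MergeStep (f, qf) (x, qx) F ∧ InLegalTree lex CFin F

/-- `SelfTriggered lex E F`: `F` is a self-triggered derivation of `E`, i.e. all
merges involved are triggered by `E`'s own selectors (`E` is the iterated merger). -/
inductive SelfTriggered {T C L : Type} (lex : Set (MGItem T C L)) :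
    MGExpr T C L → MGExpr T C L → Prop where
  | refl (E : MGExpr T C L) : SelfTriggered lex E E
  | merge {E A B F : MGExpr T C L} :
      SelfTriggered lex E A → MGDeriv lex B → MergeStep A B F → SelfTriggered lex E F
  | move {E A F : MGExpr T C L} :
      SelfTriggered lex E A → MoveStep A F → SelfTriggered lex E F

/-- `AdaptedFrom lex adapters E F`: `F` is an adapted derivation of `E`, i.e. a
derivation of `E` in which every externally triggered merge is triggered by an
adapter item. -/
inductive AdaptedFrom {T C L : Type} (lex adapters : Set (MGItem T C L)) :
    MGExpr T C L → MGExpr T C L → Prop where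
  | refl (E : MGExpr T C L) : AdaptedFrom lex adapters E E
  | selfMerge {E A B F : MGExpr T C L} :
      AdaptedFrom lex adapters E A → MGDeriv lex B → MergeStep A B F →
      AdaptedFrom lex adapters E F
  | adapterMerge {E B F : MGExpr T C L} {a : MGItem T C L} :
      a ∈ adapters → AdaptedFrom lex adapters E B → MergeStep (a, []) B F →
      AdaptedFrom lex adapters E F
  | move {E A F : MGExpr T C L} :
      AdaptedFrom lex adapters E A → MoveStep A F → AdaptedFrom lex adapters E F

/-- The features of one selector-licensor block `=𝒞, +a₁, …, +aₖ`. -/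
def blockFeats {C L : Type} (B : C × List L) : List (Feature C L) :=
  Feature.sel B.1 :: B.2.map Feature.pos

/-- The feature list consisting of the selector-licensor blocks `Bs`, the category
`c` and the licensees `ts`: `A₁, …, Aₙ, 𝒞, −t₁, …, −tₘ`. -/
def itemFeats {C L : Type} (Bs : List (C × List L)) (c : C) (ts : List L) :
    List (Feature C L) :=
  (Bs.map blockFeats).flatten ++ Feature.cat c :: ts.map Feature.neg

/-! ### The input CFG (output of Instructions 1–4) and the construction
(Instructions 5–8) -/

/-- A CFG with categories as prepared by Instructions 1–4: rules with categories,
a start symbol whose rules have the top category `CFin`, a unique target category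
for every nonterminal, and a classification of the nonterminals into free and
restricted ones. -/
structure PreppedCFG (N T Cat : Type) : Type where
  rules : Set (N × List (N ⊕ T))
  ruleCat : N × List (N ⊕ T) → Cat
  start : N
  CFin : Cat
  target : N → Cat
  Free : N → Prop

namespace PreppedCFG

variable {N T Cat : Type}

/-- The language of the underlying CFG. -/
def language (P : PreppedCFG N T Cat) : Set (List T) :=
  {w : List T | CFGDerives P.rules [Sum.inl P.start] (w.map Sum.inr)}

/-- Well-formedness of the output of Instructions 1–4: the category of each rule is
the target category of its producer; the start symbol targets `CFin`; every free
nonterminal derives every word of its target category; and every rule is terminal,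
right-free, left-restricted, or two-handed free. -/
def WellShaped (P : PreppedCFG N T Cat) : Prop :=
  (∀ r ∈ P.rules, P.ruleCat r = P.target r.1) ∧
  P.target P.start = P.CFin ∧
  (∀ X : N, P.Free X → ∀ r ∈ P.rules, P.target r.1 = P.target X → (X, r.2) ∈ P.rules) ∧
  (∀ r ∈ P.rules,
    (∃ w : List T, r.2 = w.map Sum.inr) ∨
    (∃ (w : List T) (X : N), P.Free X ∧ r.2 = w.map Sum.inr ++ [Sum.inl X]) ∨
    (∃ (Y : N) (w : List T), ¬ P.Free Y ∧ r.2 = Sum.inl Y :: w.map Sum.inr) ∨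
    (∃ (Y : N) (w : List T) (X : N), P.Free Y ∧ P.Free X ∧
      r.2 = Sum.inl Y :: (w.map Sum.inr ++ [Sum.inl X])))

/-- Specification of the licensee ordering `ord` used in Instruction 6: `ord α c`
lists, without repetition, exactly the restricted nonterminals `R` generating the
CFG word `α` in category `c`. -/
def OrdSpec (P : PreppedCFG N T Cat) (ord : List (N ⊕ T) → Cat → List N) : Prop :=
  ∀ (α : List (N ⊕ T)) (c : Cat),
    (ord α c).Nodup ∧
    ∀ R : N, R ∈ ord α c ↔ (¬ P.Free R ∧ (R, α) ∈ P.rules ∧ P.target R = c)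

/-- `WordItemOf P ord A α it`: `it` is the word item (Instructions 5–6) representing
the CFG word `α` of the rule `A → α`; the licensee name `a_R` of a restricted
nonterminal `R` is modelled as `R` itself. -/
inductive WordItemOf (P : PreppedCFG N T Cat) (ord : List (N ⊕ T) → Cat → List N) :
    N → List (N ⊕ T) → MGItem T Cat N → Prop where
  | terminal (A : N) (w : List T)
      (h : (A, (w.map Sum.inr : List (N ⊕ T))) ∈ P.rules) :
      WordItemOf P ord A (w.map Sum.inr)
        ⟨w, true, Feature.cat (P.target A) ::
          (ord (w.map Sum.inr) (P.target A)).map Feature.neg⟩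
  | rightFree (A : N) (w : List T) (X : N) (hX : P.Free X)
      (h : (A, w.map Sum.inr ++ [Sum.inl X]) ∈ P.rules) :
      WordItemOf P ord A (w.map Sum.inr ++ [Sum.inl X])
        ⟨w, true, Feature.sel (P.target X) :: Feature.cat (P.target A) ::
          (ord (w.map Sum.inr ++ [Sum.inl X]) (P.target A)).map Feature.neg⟩
  | leftRestricted (A Y : N) (w : List T) (hY : ¬ P.Free Y)
      (h : (A, Sum.inl Y :: w.map Sum.inr) ∈ P.rules) :
      WordItemOf P ord A (Sum.inl Y :: w.map Sum.inr)
        ⟨w, true, Feature.sel (P.target Y) :: Feature.pos Y ::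
          Feature.cat (P.target A) ::
          (ord (Sum.inl Y :: w.map Sum.inr) (P.target A)).map Feature.neg⟩
  | twoHanded (A Y X : N) (w : List T) (hY : P.Free Y) (hX : P.Free X)
      (h : (A, Sum.inl Y :: (w.map Sum.inr ++ [Sum.inl X])) ∈ P.rules) :
      WordItemOf P ord A (Sum.inl Y :: (w.map Sum.inr ++ [Sum.inl X]))
        ⟨w, true, Feature.sel (P.target X) :: Feature.sel (P.target Y) ::
          Feature.cat (P.target A) ::
          (ord (Sum.inl Y :: (w.map Sum.inr ++ [Sum.inl X])) (P.target A)).map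
            Feature.neg⟩

/-- `it` is a word item of the constructed lexicon. -/
def IsWordItem (P : PreppedCFG N T Cat) (ord : List (N ⊕ T) → Cat → List N)
    (it : MGItem T Cat N) : Prop :=
  ∃ (A : N) (α : List (N ⊕ T)), WordItemOf P ord A α it

/-- Remove adapters (Instruction 7): `⟨ε :: =𝒞, +a, 𝒞⟩` for each licensee `−a`
appearing in some word item of category `𝒞`. -/
def IsRemoveAdapter (P : PreppedCFG N T Cat) (ord : List (N ⊕ T) → Cat → List N)
    (it : MGItem T Cat N) : Prop :=
  ∃ (c : Cat) (a : N),
    (∃ jt : MGItem T Cat N, P.IsWordItem ord jt ∧ Feature.cat c ∈ jt.feats ∧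
      Feature.neg a ∈ jt.feats) ∧
    it = ⟨[], true, [Feature.sel c, Feature.pos a, Feature.cat c]⟩

/-- Select adapters (Instruction 8): `⟨ε :: =𝒞, +x, +t, 𝒞, −x⟩` for each licensee
`−x` and each nonempty sequence `−t` of licensees appearing behind `−x` in the
feature list of some word item of category `𝒞`. -/
def IsSelectAdapter (P : PreppedCFG N T Cat) (ord : List (N ⊕ T) → Cat → List N)
    (it : MGItem T Cat N) : Prop :=
  ∃ (c : Cat) (x : N) (t : List N), t ≠ [] ∧
    (∃ jt : MGItem T Cat N, P.IsWordItem ord jt ∧ Feature.cat c ∈ jt.feats ∧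
      (Feature.neg x :: t.map Feature.neg) <:+ jt.feats) ∧
    it = ⟨[], true, Feature.sel c :: Feature.pos x :: t.map Feature.pos ++
      [Feature.cat c, Feature.neg x]⟩

/-- `it` is an adapter item. -/
def IsAdapter (P : PreppedCFG N T Cat) (ord : List (N ⊕ T) → Cat → List N)
    (it : MGItem T Cat N) : Prop :=
  P.IsRemoveAdapter ord it ∨ P.IsSelectAdapter ord it

/-- The lexicon of the MG constructed by Instructions 5–8. -/
def MGLex (P : PreppedCFG N T Cat) (ord : List (N ⊕ T) → Cat → List N) :
    Set (MGItem T Cat N) :=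
  {it | P.IsWordItem ord it ∨ P.IsAdapter ord it}

/-- Recursion-free: no nonterminal `A` admits a nonempty derivation `A ⇒⁺ ω`
with `A` occurring in `ω`. -/
def RecFree (P : PreppedCFG N T Cat) : Prop :=
  ∀ (A : N) (ω : List (N ⊕ T)),
    Relation.TransGen (CFGProduces P.rules) [Sum.inl A] ω → Sum.inl A ∉ ω

/-- Category-recursion free: recursion-free and for every rule `A → α # 𝒞` and every
derivation `α ⇒* ω`, the string `ω` contains no nonterminal that is the left-hand
side of a rule of category `𝒞`. -/
def CatRecFree (P : PreppedCFG N T Cat) : Prop :=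
  P.RecFree ∧
  ∀ r ∈ P.rules, ∀ ω : List (N ⊕ T), CFGDerives P.rules r.2 ω →
    ∀ B : N, Sum.inl B ∈ ω → ∀ r' ∈ P.rules, r'.1 = B → P.ruleCat r' ≠ P.ruleCat r

end PreppedCFG

/-!
Call a word `u` *realizable* in category `c` with pending licensees `t₁ … tₘ` if the MG derives
either the item `⟨u : c, −t₁, …, −tₘ⟩` or the chain `⟨ε : c⟩, ⟨u : −t₁, …, −tₘ⟩`.
By induction along a CFG derivation, every word `w` derived from a nonterminal `A` is
realizable in `A`'s target category with no pending licensee, and, if `A` is restricted, with the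
single pending licensee `−a_A`. The word item of the rule used first selects the realizations of
the subwords, leaving `w` realizable with the licensees of that rule's word item; remove adapters
then check these licensees off one at a time, and a select adapter jumps from `−a_A` over all
licensees behind it; when `−a_A` is the last licensee there is no select adapter, which is why the
chain shape is needed. At the start symbol this is a legal expression of category `𝒞Fin`.
-/

section MinimalistGrammar

variable {T C L : Type} {lex : Set (MGItem T C L)}

namespace MGDeriv

theorem merge1 {e₁ e₂ : List T} {f : C} {t : List (Feature C L)} {b : Bool}
    {q : List (MGItem T C L)} (h₁ : (⟨e₁, true, Feature.sel f :: t⟩ : MGItem T C L) ∈ lex)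
    (h₂ : MGDeriv lex (⟨e₂, b, [Feature.cat f]⟩, q)) :
    MGDeriv lex (⟨e₁ ++ e₂, false, t⟩, q) :=
  .merge (.ax h₁) h₂ (.merge1 e₁ e₂ f t b q)

theorem merge2 {e₁ e₂ : List T} {f : C} {t : List (Feature C L)} {b : Bool}
    (h₁ : MGDeriv lex (⟨e₁, false, Feature.sel f :: t⟩, []))
    (h₂ : MGDeriv lex (⟨e₂, b, [Feature.cat f]⟩, [])) :
    MGDeriv lex (⟨e₂ ++ e₁, false, t⟩, []) :=
  .merge h₁ h₂ (.merge2 e₁ e₂ f t b [] [])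

theorem merge3 {e₁ e₂ : List T} {f : C} {t₁ t₂ : List (Feature C L)} {b : Bool}
    (h₁ : (⟨e₁, true, Feature.sel f :: t₁⟩ : MGItem T C L) ∈ lex)
    (h₂ : MGDeriv lex (⟨e₂, b, Feature.cat f :: t₂⟩, [])) (ht₂ : t₂ ≠ []) :
    MGDeriv lex (⟨e₁, false, t₁⟩, [⟨e₂, false, t₂⟩]) :=
  .merge (.ax h₁) h₂ (.merge3 e₁ e₂ f t₁ t₂ true b [] [] ht₂)

theorem move1 {e₁ e₂ : List T} {f : L} {t : List (Feature C L)} {b : Bool}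
    (h : MGDeriv lex (⟨e₁, false, Feature.pos f :: t⟩, [⟨e₂, b, [Feature.neg f]⟩])) :
    MGDeriv lex (⟨e₂ ++ e₁, false, t⟩, []) :=
  .move h (.move1 e₁ e₂ f t b [] [])

theorem move2 {e₁ e₂ : List T} {f : L} {t t₂ : List (Feature C L)} {b : Bool}
    (h : MGDeriv lex (⟨e₁, false, Feature.pos f :: t⟩, [⟨e₂, b, Feature.neg f :: t₂⟩]))
    (ht₂ : t₂ ≠ []) :
    MGDeriv lex (⟨e₁, false, t⟩, [⟨e₂, false, t₂⟩]) :=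
  .move h (.move2 e₁ e₂ f t t₂ b [] [] ht₂)

theorem move_all {x : L} {t : List L} {K : List (Feature C L)} {e u : List T} {b : Bool}
    (h : MGDeriv lex (⟨e, false, Feature.pos x :: (t.map Feature.pos ++ K)⟩,
      [⟨u, b, Feature.neg x :: t.map Feature.neg⟩])) :
    MGDeriv lex (⟨u ++ e, false, K⟩, []) := by
  induction t generalizing x b with
  | nil => exact move1 h
  | cons y t ih => exact ih (move2 h (List.cons_ne_nil _ _))

end MGDeriv

def Realizable (lex : Set (MGItem T C L)) (c : C) (u : List T) (ts : List L) : Prop :=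
  (∃ b, MGDeriv lex (⟨u, b, Feature.cat c :: ts.map Feature.neg⟩, [])) ∨
  (ts ≠ [] ∧
    MGDeriv lex (⟨[], false, [Feature.cat c]⟩, [⟨u, false, ts.map Feature.neg⟩]))

namespace Realizable

variable {c : C} {u : List T}

theorem exists_mgDeriv (h : Realizable lex c u []) :
    ∃ b, MGDeriv lex (⟨u, b, [Feature.cat c]⟩, []) := by
  rcases h with h | ⟨hne, _⟩
  · exact h
  · exact absurd rfl hne

/-- Both shapes of a realization lead to the same chain, by merge-3 resp. merge-1. -/
theorem mgDeriv_merge {v : List T} {x : L} {ts : List L} {F : List (Feature C L)}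
    (hv : (⟨v, true, Feature.sel c :: Feature.pos x :: F⟩ : MGItem T C L) ∈ lex)
    (h : Realizable lex c u (x :: ts)) :
    MGDeriv lex (⟨v, false, Feature.pos x :: F⟩,
      [⟨u, false, Feature.neg x :: ts.map Feature.neg⟩]) := by
  rcases h with ⟨b, h⟩ | ⟨-, h⟩
  · exact MGDeriv.merge3 hv h (List.cons_ne_nil _ _)
  · simpa using MGDeriv.merge1 hv h

theorem of_cons {a : L} {ts : List L}
    (hremove : (⟨[], true, [Feature.sel c, Feature.pos a, Feature.cat c]⟩ : MGItem T C L) ∈ lex)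
    (h : Realizable lex c u (a :: ts)) : Realizable lex c u ts := by
  have hmerged := h.mgDeriv_merge hremove
  cases ts with
  | nil => exact Or.inl ⟨false, by simpa using hmerged.move1⟩
  | cons t ts => exact Or.inr ⟨List.cons_ne_nil _ _, hmerged.move2 (List.cons_ne_nil _ _)⟩

theorem of_append {pre ts : List L}
    (hremove : ∀ a ∈ pre,
      (⟨[], true, [Feature.sel c, Feature.pos a, Feature.cat c]⟩ : MGItem T C L) ∈ lex)
    (h : Realizable lex c u (pre ++ ts)) : Realizable lex c u ts := by
  induction pre with
  | nil => exact h
  | cons a pre ih =>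
    exact ih (fun b hb => hremove b (List.mem_cons_of_mem a hb))
      (h.of_cons (hremove a List.mem_cons_self))

theorem select {x : L} {t : List L}
    (hselect : (⟨[], true, Feature.sel c :: Feature.pos x :: t.map Feature.pos ++
      [Feature.cat c, Feature.neg x]⟩ : MGItem T C L) ∈ lex)
    (h : Realizable lex c u (x :: t)) : Realizable lex c u [x] :=
  Or.inl ⟨false, by simpa using (h.mgDeriv_merge hselect).move_all⟩

theorem mgDeriv_merge_move {v : List T} {x : L} {t : List (Feature C L)}
    (hv : (⟨v, true, Feature.sel c :: Feature.pos x :: t⟩ : MGItem T C L) ∈ lex)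
    (h : Realizable lex c u [x]) : MGDeriv lex (⟨u ++ v, false, t⟩, []) := by
  simpa using (h.mgDeriv_merge hv).move1

end Realizable

end MinimalistGrammar

section ContextFreeGrammar

variable {N T : Type}

inductive Yields (R : N → List T → Prop) : List (N ⊕ T) → List T → Prop
  | nil : Yields R [] []
  | inr (t : T) {u : List (N ⊕ T)} {w : List T} :
      Yields R u w → Yields R (Sum.inr t :: u) (t :: w)
  | inl {A : N} {v : List T} {u : List (N ⊕ T)} {w : List T} :
      R A v → Yields R u w → Yields R (Sum.inl A :: u) (v ++ w)

namespace Yields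

variable {R : N → List T → Prop}

theorem map_inr (w : List T) : Yields R (w.map Sum.inr) w := by
  induction w with
  | nil => exact .nil
  | cons t w ih => exact .inr t ih

theorem eq_of_map_inr {v w : List T} (h : Yields R (v.map Sum.inr) w) : w = v := by
  induction v generalizing w with
  | nil => cases h; rfl
  | cons t v ih => cases h with | inr _ h => rw [ih h]

theorem append {u₁ u₂ : List (N ⊕ T)} {w₁ w₂ : List T} (h₁ : Yields R u₁ w₁)
    (h₂ : Yields R u₂ w₂) : Yields R (u₁ ++ u₂) (w₁ ++ w₂) := by
  induction h₁ with
  | nil => exact h₂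
  | inr t _ ih => exact .inr t ih
  | inl hA _ ih => simpa using Yields.inl hA ih

theorem exists_of_append {u₁ u₂ : List (N ⊕ T)} {w : List T} (h : Yields R (u₁ ++ u₂) w) :
    ∃ w₁ w₂, w = w₁ ++ w₂ ∧ Yields R u₁ w₁ ∧ Yields R u₂ w₂ := by
  induction u₁ generalizing w with
  | nil => exact ⟨[], w, rfl, .nil, h⟩
  | cons s u₁ ih =>
    cases h with
    | inr t h =>
      obtain ⟨w₁, w₂, rfl, h₁, h₂⟩ := ih h
      exact ⟨t :: w₁, w₂, rfl, .inr t h₁, h₂⟩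
    | inl hA h =>
      obtain ⟨w₁, w₂, rfl, h₁, h₂⟩ := ih h
      exact ⟨_ ++ w₁, w₂, (List.append_assoc ..).symm, .inl hA h₁, h₂⟩

theorem exists_of_cons_inl {A : N} {u : List (N ⊕ T)} {w : List T}
    (h : Yields R (Sum.inl A :: u) w) : ∃ v w', w = v ++ w' ∧ R A v ∧ Yields R u w' := by
  cases h with
  | inl hA h => exact ⟨_, _, rfl, hA, h⟩

theorem exists_of_map_inr_append_inl {v w : List T} {X : N}
    (h : Yields R (v.map Sum.inr ++ [Sum.inl X]) w) : ∃ wX, w = v ++ wX ∧ R X wX := by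
  obtain ⟨w₁, w₂, rfl, h₁, h₂⟩ := h.exists_of_append
  obtain ⟨wX, w', rfl, hX, h'⟩ := h₂.exists_of_cons_inl
  cases h'
  exact ⟨wX, by rw [h₁.eq_of_map_inr, List.append_nil], hX⟩

theorem of_produces {rules : Set (N × List (N ⊕ T))}
    (hR : ∀ A α w, (A, α) ∈ rules → Yields R α w → R A w) {u v : List (N ⊕ T)} {w : List T}
    (huv : CFGProduces rules u v) (hv : Yields R v w) : Yields R u w := by
  obtain ⟨A, α, p, s, hrule, rfl, rfl⟩ := huv
  obtain ⟨wpα, ws, rfl, hpα, hs⟩ := hv.exists_of_append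
  obtain ⟨wp, wα, rfl, hp, hα⟩ := hpα.exists_of_append
  simpa using hp.append (.inl (hR A α wα hrule hα) hs)

theorem of_cfgDerives {rules : Set (N × List (N ⊕ T))}
    (hR : ∀ A α w, (A, α) ∈ rules → Yields R α w → R A w) {u v : List (N ⊕ T)} {w : List T}
    (huv : CFGDerives rules u v) (hv : Yields R v w) : Yields R u w := by
  induction huv using Relation.ReflTransGen.head_induction_on with
  | refl => exact hv
  | head huv _ ih => exact ih.of_produces hR huv

end Yields

theorem CFGDerives.rel_of_closed {rules : Set (N × List (N ⊕ T))} {R : N → List T → Prop}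
    (hR : ∀ A α w, (A, α) ∈ rules → Yields R α w → R A w) {A : N} {w : List T}
    (h : CFGDerives rules [Sum.inl A] (w.map Sum.inr)) : R A w := by
  obtain ⟨v, w', rfl, hA, hnil⟩ := (Yields.of_cfgDerives hR h (.map_inr w)).exists_of_cons_inl
  cases hnil
  simpa using hA

end ContextFreeGrammar

namespace PreppedCFG

variable {N T Cat : Type} {P : PreppedCFG N T Cat} {ord : List (N ⊕ T) → Cat → List N}

def NontermRealizable (P : PreppedCFG N T Cat) (ord : List (N ⊕ T) → Cat → List N) (A : N)
    (w : List T) : Prop :=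
  Realizable (P.MGLex ord) (P.target A) w [] ∧
    (¬ P.Free A → Realizable (P.MGLex ord) (P.target A) w [A])

namespace WordItemOf

variable {A : N} {α : List (N ⊕ T)} {it : MGItem T Cat N}

theorem mem_rules (h : WordItemOf P ord A α it) : (A, α) ∈ P.rules := by
  cases h <;> assumption

theorem mem_mgLex (h : WordItemOf P ord A α it) : it ∈ P.MGLex ord :=
  Or.inl ⟨A, α, h⟩

theorem feats_eq (h : WordItemOf P ord A α it) :
    ∃ F₀, it.feats = F₀ ++ Feature.cat (P.target A) ::
      (ord α (P.target A)).map Feature.neg := by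
  cases h
  · exact ⟨[], rfl⟩
  · exact ⟨[_], rfl⟩
  · exact ⟨[_, _], rfl⟩
  · exact ⟨[_, _], rfl⟩

theorem removeAdapter_mem (h : WordItemOf P ord A α it) {a : N}
    (ha : a ∈ ord α (P.target A)) :
    (⟨[], true, [Feature.sel (P.target A), Feature.pos a, Feature.cat (P.target A)]⟩ :
      MGItem T Cat N) ∈ P.MGLex ord := by
  obtain ⟨F₀, hF⟩ := h.feats_eq
  refine Or.inr (Or.inl ⟨P.target A, a, ⟨it, ⟨A, α, h⟩, ?_, ?_⟩, rfl⟩) <;> simp [hF, ha]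

theorem selectAdapter_mem (h : WordItemOf P ord A α it) {pre t : List N} {x : N}
    (hsplit : ord α (P.target A) = pre ++ x :: t) (ht : t ≠ []) :
    (⟨[], true, Feature.sel (P.target A) :: Feature.pos x :: t.map Feature.pos ++
      [Feature.cat (P.target A), Feature.neg x]⟩ : MGItem T Cat N) ∈ P.MGLex ord := by
  obtain ⟨F₀, hF⟩ := h.feats_eq
  refine Or.inr (Or.inr ⟨P.target A, x, t, ht, ⟨it, ⟨A, α, h⟩, by simp [hF], ?_⟩, rfl⟩)
  exact ⟨F₀ ++ Feature.cat (P.target A) :: pre.map Feature.neg, by simp [hF, hsplit]⟩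

theorem exists_mgDeriv (h : WordItemOf P ord A α it) {w : List T}
    (hα : Yields (P.NontermRealizable ord) α w) :
    ∃ b, MGDeriv (P.MGLex ord)
      (⟨w, b, Feature.cat (P.target A) :: (ord α (P.target A)).map Feature.neg⟩, []) := by
  have hit := h.mem_mgLex
  cases h with
  | terminal v =>
    rw [hα.eq_of_map_inr]
    exact ⟨true, .ax hit⟩
  | rightFree v X =>
    obtain ⟨wX, rfl, hX⟩ := hα.exists_of_map_inr_append_inl
    obtain ⟨b, hX⟩ := hX.1.exists_mgDeriv
    exact ⟨false, MGDeriv.merge1 hit hX⟩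
  | leftRestricted Y v hY =>
    obtain ⟨wY, w', rfl, hY', hv⟩ := hα.exists_of_cons_inl
    rw [hv.eq_of_map_inr]
    exact ⟨false, (hY'.2 hY).mgDeriv_merge_move hit⟩
  | twoHanded Y X v =>
    obtain ⟨wY, w', rfl, hY, hvX⟩ := hα.exists_of_cons_inl
    obtain ⟨wX, rfl, hX⟩ := hvX.exists_of_map_inr_append_inl
    obtain ⟨bX, hX⟩ := hX.1.exists_mgDeriv
    obtain ⟨bY, hY⟩ := hY.1.exists_mgDeriv
    exact ⟨false, (MGDeriv.merge1 hit hX).merge2 hY⟩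

theorem nontermRealizable (hOrd : P.OrdSpec ord) (h : WordItemOf P ord A α it) {w : List T}
    {b : Bool} (hw : MGDeriv (P.MGLex ord)
      (⟨w, b, Feature.cat (P.target A) :: (ord α (P.target A)).map Feature.neg⟩, [])) :
    P.NontermRealizable ord A w := by
  have hrealizable : Realizable (P.MGLex ord) (P.target A) w (ord α (P.target A)) :=
    Or.inl ⟨b, hw⟩
  refine ⟨?_, fun hA => ?_⟩
  · rw [← List.append_nil (ord α _)] at hrealizable
    exact hrealizable.of_append fun a ha => h.removeAdapter_mem ha
  · have hmem : A ∈ ord α (P.target A) := ((hOrd α _).2 A).2 ⟨hA, h.mem_rules, rfl⟩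
    obtain ⟨pre, post, hsplit⟩ := List.append_of_mem hmem
    have hremoved : Realizable (P.MGLex ord) (P.target A) w (A :: post) := by
      rw [hsplit] at hrealizable
      exact hrealizable.of_append fun a ha => h.removeAdapter_mem (by simp [hsplit, ha])
    cases post with
    | nil => exact hremoved
    | cons t post => exact hremoved.select (h.selectAdapter_mem hsplit (List.cons_ne_nil _ _))

end WordItemOf

theorem nontermRealizable_of_rule (hWS : P.WellShaped) (hOrd : P.OrdSpec ord) {A : N}
    {α : List (N ⊕ T)} {w : List T} (hrule : (A, α) ∈ P.rules)
    (hα : Yields (P.NontermRealizable ord) α w) : P.NontermRealizable ord A w := by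
  have hitem : ∃ it, WordItemOf P ord A α it := by
    rcases hWS.2.2.2 (A, α) hrule with ⟨v, rfl⟩ | ⟨v, X, hX, rfl⟩ | ⟨Y, v, hY, rfl⟩ |
      ⟨Y, v, X, hY, hX, rfl⟩
    · exact ⟨_, .terminal A v hrule⟩
    · exact ⟨_, .rightFree A v X hX hrule⟩
    · exact ⟨_, .leftRestricted A Y v hY hrule⟩
    · exact ⟨_, .twoHanded A Y X v hY hX hrule⟩
  obtain ⟨it, hit⟩ := hitem
  obtain ⟨b, hw⟩ := hit.exists_mgDeriv hα
  exact hit.nontermRealizable hOrd hw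

end PreppedCFG

/-- Theorem 2: every terminal expression generatable by the prepared
CFG with categories `I` (= `P`) is a legal expression of the MG constructed by
Instructions 5–8: `L(I) ⊆ L(G)`. -/
theorem stmt6 {N T Cat : Type} (P : PreppedCFG N T Cat)
    (ord : List (N ⊕ T) → Cat → List N)
    (hWS : P.WellShaped) (hOrd : P.OrdSpec ord) :
    P.language ⊆ MGLanguage (P.MGLex ord) P.CFin := by
  intro w hw
  have hstart : P.NontermRealizable ord P.start w :=
    CFGDerives.rel_of_closed (fun _ _ _ => P.nontermRealizable_of_rule hWS hOrd) hw
  rw [← hWS.2.1]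
  exact hstart.1.exists_mgDeriv
end

section
/- (Lemma: classification of merger items.) Let G be the minimalist grammar constructed from a CFG with categories I by Instructions 5–8. If an item x of G triggers a merge during the construction of a legal derivation tree of G, then x is an adapter item, a lexical word item, or a self-triggered derivation of a lexical word item. -/
/-! Every derivable expression arises from a lexical item by merges it triggers itself and
by moves, and each of these steps consumes the first feature of the head. An adapter carries
its only selector in front, so after its first step no selector is left; hence an adapter can
trigger a merge only as the bare lexical item, while any other merger descends from a word
item. -/

theorem MergeStep.feats_eq_tail {T C L : Type} {A B F : MGExpr T C L}
    (h : MergeStep A B F) : F.1.feats = A.1.feats.tail := by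
  cases h <;> rfl

theorem MergeStep.exists_feats_eq_sel_cons {T C L : Type} {A B F : MGExpr T C L}
    (h : MergeStep A B F) :
    ∃ (f : C) (t : List (Feature C L)), A.1.feats = Feature.sel f :: t := by
  cases h <;> exact ⟨_, _, rfl⟩

theorem MoveStep.feats_eq_tail {T C L : Type} {A F : MGExpr T C L}
    (h : MoveStep A F) : F.1.feats = A.1.feats.tail := by
  cases h <;> rfl

theorem MGDeriv.exists_selfTriggered {T C L : Type} {lex : Set (MGItem T C L)}
    {x : MGExpr T C L} (hx : MGDeriv lex x) :
    ∃ i ∈ lex, SelfTriggered lex (i, []) x := by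
  induction hx with
  | ax hi => exact ⟨_, hi, .refl _⟩
  | merge _ hB hm ih _ =>
    obtain ⟨i, hi, hst⟩ := ih
    exact ⟨i, hi, hst.merge hB hm⟩
  | move _ hmv ih =>
    obtain ⟨i, hi, hst⟩ := ih
    exact ⟨i, hi, hst.move hmv⟩

namespace SelfTriggered

variable {T C L : Type} {lex : Set (MGItem T C L)} {E x : MGExpr T C L}

theorem eq_or_feats_suffix_tail (h : SelfTriggered lex E x) :
    x = E ∨ x.1.feats <:+ E.1.feats.tail := by
  induction h with
  | refl => exact .inl rfl
  | @merge A _ _ _ _ hm ih =>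
    rw [hm.feats_eq_tail]
    rcases ih with rfl | hsuf
    · exact .inr List.suffix_rfl
    · exact .inr ((List.tail_suffix A.1.feats).trans hsuf)
  | @move A _ _ hmv ih =>
    rw [hmv.feats_eq_tail]
    rcases ih with rfl | hsuf
    · exact .inr List.suffix_rfl
    · exact .inr ((List.tail_suffix A.1.feats).trans hsuf)

theorem eq_of_mergeStep {B F : MGExpr T C L} (h : SelfTriggered lex E x)
    (hm : MergeStep x B F) (hE : ∀ f, Feature.sel f ∉ E.1.feats.tail) : x = E := by
  obtain ⟨f, t, hx⟩ := hm.exists_feats_eq_sel_cons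
  refine h.eq_or_feats_suffix_tail.resolve_right fun hsuf => hE f ?_
  exact hsuf.subset (hx ▸ List.mem_cons_self)

end SelfTriggered

theorem PreppedCFG.sel_not_mem_feats_tail_of_isAdapter {N T Cat : Type} {P : PreppedCFG N T Cat}
    {ord : List (N ⊕ T) → Cat → List N} {i : MGItem T Cat N}
    (ha : P.IsAdapter ord i) (f : Cat) : Feature.sel f ∉ i.feats.tail := by
  rcases ha with ⟨c, a, _, rfl⟩ | ⟨c, a, t, _, _, rfl⟩ <;> simp

theorem stmt10_general {N T Cat : Type} (P : PreppedCFG N T Cat)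
    (ord : List (N ⊕ T) → Cat → List N)
    (x : MGExpr T Cat N)
    (hx : MGDeriv (P.MGLex ord) x)
    (htrig : ∃ (B F : MGExpr T Cat N), MGDeriv (P.MGLex ord) B ∧
      MergeStep x B F ∧ InLegalTree (P.MGLex ord) P.CFin F) :
    (∃ a : MGItem T Cat N, P.IsAdapter ord a ∧ x = (a, [])) ∨
    (∃ w : MGItem T Cat N, P.IsWordItem ord w ∧ x = (w, [])) ∨
    (∃ w : MGItem T Cat N, P.IsWordItem ord w ∧
      SelfTriggered (P.MGLex ord) (w, []) x) := by
  obtain ⟨i, hword | hadapter, hst⟩ := hx.exists_selfTriggered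
  · exact .inr (.inr ⟨i, hword, hst⟩)
  · obtain ⟨_, _, _, hm, _⟩ := htrig
    exact .inl ⟨i, hadapter, hst.eq_of_mergeStep hm
      (PreppedCFG.sel_not_mem_feats_tail_of_isAdapter hadapter)⟩

/-- classification of merger items: if an item `x` of the constructed
MG triggers a merge during the construction of a legal derivation tree, then `x` is
an adapter item, a lexical word item, or a self-triggered derivation of a lexical
word item. -/
theorem stmt10 {N T Cat : Type} (P : PreppedCFG N T Cat)
    (ord : List (N ⊕ T) → Cat → List N)
    (hWS : P.WellShaped) (hOrd : P.OrdSpec ord)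
    (x : MGExpr T Cat N)
    (hx : MGDeriv (P.MGLex ord) x)
    (htrig : ∃ (B F : MGExpr T Cat N), MGDeriv (P.MGLex ord) B ∧
      MergeStep x B F ∧ InLegalTree (P.MGLex ord) P.CFin F) :
    (∃ a : MGItem T Cat N, P.IsAdapter ord a ∧ x = (a, [])) ∨
    (∃ w : MGItem T Cat N, P.IsWordItem ord w ∧ x = (w, [])) ∨
    (∃ w : MGItem T Cat N, P.IsWordItem ord w ∧
      SelfTriggered (P.MGLex ord) (w, []) x) :=
  stmt10_general P ord x hx htrig
end

section
/- (Lemma: classification of derived items.) Let G be the minimalist grammar constructed from a CFG with categories I by Instructions 5–8. Then every derived (non-lexical) item x of G occurring in a legal derivation tree is an adapted derivation of a lexical word item (called its head word). -/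
/-- Any derivable expression with a lexical head is an axiom: the head is in the
lexicon and the chain is empty. -/
lemma lexHead {T C L : Type} {lex : Set (MGItem T C L)} {E : MGExpr T C L}
    (h : MGDeriv lex E) (hl : E.1.isLex = true) : E.1 ∈ lex ∧ E.2 = [] := by
  cases h with
  | ax hi => exact ⟨hi, rfl⟩
  | merge hA hB hs => cases hs <;> simp_all
  | move hA hs => cases hs <;> simp_all

/-- Every item of the constructed lexicon is lexical. -/
lemma lexIsLex {N T Cat : Type} {P : PreppedCFG N T Cat}
    {ord : List (N ⊕ T) → Cat → List N} {it : MGItem T Cat N}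
    (h : it ∈ P.MGLex ord) : it.isLex = true := by
  rcases h with ⟨A, α, hw⟩ | ⟨c, a, _, rfl⟩ | ⟨c, x, t, _, _, rfl⟩
  · cases hw <;> rfl
  · rfl
  · rfl

/-- A lexicon item whose feature list starts with a category feature is a word
item. -/
lemma catHeadIsWord {N T Cat : Type} {P : PreppedCFG N T Cat}
    {ord : List (N ⊕ T) → Cat → List N} {it : MGItem T Cat N}
    {f : Cat} {t : List (Feature Cat N)}
    (h : it ∈ P.MGLex ord) (hf : it.feats = Feature.cat f :: t) :
    P.IsWordItem ord it := by
  rcases h with hw | ⟨c, a, _, rfl⟩ | ⟨c, x, s, _, _, rfl⟩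
  · exact hw
  · simp at hf
  · simp at hf

/-- Key lemma: every derivable expression with a derived (non-lexical) head is an
adapted derivation of a word item. -/
lemma adaptedOfDerived {N T Cat : Type} (P : PreppedCFG N T Cat)
    (ord : List (N ⊕ T) → Cat → List N) (x : MGExpr T Cat N)
    (hx : MGDeriv (P.MGLex ord) x) (hderived : x.1.isLex = false) :
    ∃ w : MGItem T Cat N, P.IsWordItem ord w ∧
      AdaptedFrom (P.MGLex ord) {a | P.IsAdapter ord a} (w, []) x := by
  induction hx with
  | ax hi => exact absurd (lexIsLex hi) (by simp_all)
  | @merge A B F hA hB hstep ihA ihB =>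
    clear hderived
    cases hstep with
    | merge1 e₁ e₂ f t b q =>
      obtain ⟨hmem, -⟩ := lexHead hA rfl
      rcases hmem with hw | hadp
      · exact ⟨_, hw, AdaptedFrom.selfMerge (AdaptedFrom.refl _) hB
          (MergeStep.merge1 e₁ e₂ f t b q)⟩
      · -- the merger is an adapter; analyse the mergee
        have hB' : ∃ w : MGItem T Cat N, P.IsWordItem ord w ∧
            AdaptedFrom (P.MGLex ord) {a | P.IsAdapter ord a} (w, [])
              (⟨e₂, b, [Feature.cat f]⟩, q) := by
          cases b with
          | false => exact ihB rfl
          | true =>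
            obtain ⟨hmemB, hqB⟩ := lexHead hB rfl
            have hword := catHeadIsWord (f := f) (t := []) hmemB rfl
            refine ⟨_, hword, ?_⟩
            simp only at hqB
            rw [hqB]
            exact AdaptedFrom.refl _
        obtain ⟨w, hw, had⟩ := hB'
        exact ⟨w, hw, AdaptedFrom.adapterMerge hadp had
          (MergeStep.merge1 e₁ e₂ f t b q)⟩
    | merge2 e₁ e₂ f t b q₁ q₂ =>
      obtain ⟨w, hw, had⟩ := ihA rfl
      exact ⟨w, hw, AdaptedFrom.selfMerge had hB
        (MergeStep.merge2 e₁ e₂ f t b q₁ q₂)⟩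
    | merge3 e₁ e₂ f t₁ t₂ b₁ b₂ q₁ q₂ ht₂ =>
      cases b₁ with
      | false =>
        obtain ⟨w, hw, had⟩ := ihA rfl
        exact ⟨w, hw, AdaptedFrom.selfMerge had hB
          (MergeStep.merge3 e₁ e₂ f t₁ t₂ false b₂ q₁ q₂ ht₂)⟩
      | true =>
        obtain ⟨hmem, hq⟩ := lexHead hA rfl
        simp only at hq
        subst hq
        rcases hmem with hw | hadp
        · exact ⟨_, hw, AdaptedFrom.selfMerge (AdaptedFrom.refl _) hB
            (MergeStep.merge3 e₁ e₂ f t₁ t₂ true b₂ [] q₂ ht₂)⟩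
        · have hB' : ∃ w : MGItem T Cat N, P.IsWordItem ord w ∧
              AdaptedFrom (P.MGLex ord) {a | P.IsAdapter ord a} (w, [])
                (⟨e₂, b₂, Feature.cat f :: t₂⟩, q₂) := by
            cases b₂ with
            | false => exact ihB rfl
            | true =>
              obtain ⟨hmemB, hqB⟩ := lexHead hB rfl
              have hword := catHeadIsWord (f := f) (t := t₂) hmemB rfl
              refine ⟨_, hword, ?_⟩
              simp only at hqB
              rw [hqB]
              exact AdaptedFrom.refl _
          obtain ⟨w, hw, had⟩ := hB'
          exact ⟨w, hw, AdaptedFrom.adapterMerge hadp had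
            (MergeStep.merge3 e₁ e₂ f t₁ t₂ true b₂ [] q₂ ht₂)⟩
  | @move A F hA hstep ihA =>
    clear hderived
    cases hstep with
    | move1 e₁ e₂ f t b q₁ q₂ =>
      obtain ⟨w, hw, had⟩ := ihA rfl
      exact ⟨w, hw, AdaptedFrom.move had (MoveStep.move1 e₁ e₂ f t b q₁ q₂)⟩
    | move2 e₁ e₂ f t t₂ b q₁ q₂ ht₂ =>
      obtain ⟨w, hw, had⟩ := ihA rfl
      exact ⟨w, hw, AdaptedFrom.move had (MoveStep.move2 e₁ e₂ f t t₂ b q₁ q₂ ht₂)⟩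

/-- classification of derived items: every derived (non-lexical) item
of the constructed MG occurring in a legal derivation tree is an adapted derivation
of a lexical word item (its head word). -/
theorem stmt11 {N T Cat : Type} (P : PreppedCFG N T Cat)
    (ord : List (N ⊕ T) → Cat → List N)
    (hWS : P.WellShaped) (hOrd : P.OrdSpec ord)
    (x : MGExpr T Cat N)
    (hx : MGDeriv (P.MGLex ord) x)
    (hleg : InLegalTree (P.MGLex ord) P.CFin x)
    (hderived : x.1.isLex = false) :
    ∃ w : MGItem T Cat N, P.IsWordItem ord w ∧
      AdaptedFrom (P.MGLex ord) {a | P.IsAdapter ord a} (w, []) x :=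
  adaptedOfDerived P ord x hx hderived
end

section
/- (Lemma: detection of CFG rules.) Let I be a CFG with categories produced by Instructions 1–4 and G the minimalist grammar constructed from I by Instructions 5–6. Let φ and χ be right-hand-side words of rules of I with categories 𝒞_φ and 𝒞_χ, and let F = ⟨f :: A₁,…,Aₙ, 𝒞_φ, …⟩ (n ≤ 2) and X = ⟨x :: …, 𝒞_χ, −t₁,…,−t_m⟩ be their word items created by Instruction 5 (with exponents f and x equal to φ and χ with nonterminals omitted). If some selector-licensor block Aᵢ of F equals either =𝒞_χ or =𝒞_χ, +tⱼ for some j ≤ m, then there exists a nonterminal N contained in the word φ such that N generates χ, i.e. I has the rule N → χ # 𝒞_χ and N occurs in φ. -/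
/-! A feature list determines its selector-licensor blocks, and in a word item every block
stems from a nonterminal `Nn` of the CFG word. A block `=𝒞(Nn)` of a free `Nn` matching the
category of `χ` yields `Nn → χ`, since free nonterminals derive every word of their target
category. A block `=𝒞(Nn), +a_Nn` of a restricted `Nn` matching a licensee `−a_Nn` of the item
of `χ` yields `Nn → χ` as well, since Instruction 6 puts `−a_Nn` there only for such rules. -/

section ItemFeats

variable {C L : Type}

@[simp]
lemma itemFeats_nil (c : C) (ts : List L) :
    itemFeats [] c ts = Feature.cat c :: ts.map Feature.neg := rfl

@[simp]
lemma itemFeats_cons (B : C × List L) (Bs : List (C × List L)) (c : C) (ts : List L) :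
    itemFeats (B :: Bs) c ts =
      Feature.sel B.1 :: (B.2.map Feature.pos ++ itemFeats Bs c ts) := by
  simp [itemFeats, blockFeats]

lemma itemFeats_ne_pos_cons (Bs : List (C × List L)) (c : C) (ts : List L) (x : L)
    (u : List (Feature C L)) : itemFeats Bs c ts ≠ Feature.pos x :: u := by
  cases Bs <;> simp

lemma map_pos_append_itemFeats_inj {l l' : List L} {Bs Bs' : List (C × List L)}
    {c c' : C} {ts ts' : List L}
    (h : l.map Feature.pos ++ itemFeats Bs c ts = l'.map Feature.pos ++ itemFeats Bs' c' ts') :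
    l = l' ∧ itemFeats Bs c ts = itemFeats Bs' c' ts' := by
  induction l generalizing l' with
  | nil =>
    cases l' with
    | nil => exact ⟨rfl, h⟩
    | cons y l' => exact absurd h (itemFeats_ne_pos_cons _ _ _ _ _)
  | cons x l ih =>
    cases l' with
    | nil => exact absurd h.symm (itemFeats_ne_pos_cons _ _ _ _ _)
    | cons y l' =>
      simp only [List.map_cons, List.cons_append, List.cons.injEq, Feature.pos.injEq] at h
      obtain ⟨hl, hrest⟩ := ih h.2
      exact ⟨by rw [h.1, hl], hrest⟩

lemma itemFeats_inj_blocks {Bs Bs' : List (C × List L)} {c c' : C} {ts ts' : List L}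
    (h : itemFeats Bs c ts = itemFeats Bs' c' ts') : Bs = Bs' := by
  induction Bs generalizing Bs' with
  | nil => cases Bs' <;> simp_all
  | cons B Bs ih =>
    cases Bs' with
    | nil => simp at h
    | cons B' Bs' =>
      simp only [itemFeats_cons, List.cons.injEq, Feature.sel.injEq] at h
      obtain ⟨hl, hrest⟩ := map_pos_append_itemFeats_inj h.2
      rw [ih hrest, Prod.ext h.1 hl]

end ItemFeats

namespace PreppedCFG

variable {N T Cat : Type} {P : PreppedCFG N T Cat} {ord : List (N ⊕ T) → Cat → List N}

/-- Instruction 5 translates a nonterminal `Nn` of a CFG word into the block `=𝒞(Nn)` if `Nn`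
is free and into `=𝒞(Nn), +a_Nn` if it is restricted. -/
def IsBlockOf (P : PreppedCFG N T Cat) (Nn : N) (B : Cat × List N) : Prop :=
  (P.Free Nn ∧ B = (P.target Nn, [])) ∨ (¬ P.Free Nn ∧ B = (P.target Nn, [Nn]))

lemma WordItemOf.rule_mem {A : N} {α : List (N ⊕ T)} {it : MGItem T Cat N}
    (h : P.WordItemOf ord A α it) : (A, α) ∈ P.rules := by
  cases h <;> assumption

lemma WordItemOf.exists_blocks {A : N} {α : List (N ⊕ T)} {it : MGItem T Cat N}
    (h : P.WordItemOf ord A α it) :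
    ∃ Bs : List (Cat × List N), it.feats = itemFeats Bs (P.target A) (ord α (P.target A)) ∧
      ∀ B ∈ Bs, ∃ Nn : N, Sum.inl Nn ∈ α ∧ P.IsBlockOf Nn B := by
  cases h with
  | terminal w => exact ⟨[], rfl, by simp⟩
  | rightFree w X hX =>
    exact ⟨[(P.target X, [])], by simp, by simpa [IsBlockOf] using hX⟩
  | leftRestricted Y w hY =>
    exact ⟨[(P.target Y, [Y])], by simp, by simpa [IsBlockOf] using hY⟩
  | twoHanded Y X w hY hX =>
    refine ⟨[(P.target X, []), (P.target Y, [])], by simp, ?_⟩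
    simp only [List.mem_cons, List.not_mem_nil, or_false, forall_eq_or_imp, forall_eq]
    exact ⟨⟨X, by simp, Or.inl ⟨hX, rfl⟩⟩, ⟨Y, by simp, Or.inl ⟨hY, rfl⟩⟩⟩

lemma WordItemOf.exists_of_mem_blocks {A : N} {α : List (N ⊕ T)} {it : MGItem T Cat N}
    (h : P.WordItemOf ord A α it) {Bs : List (Cat × List N)} {c : Cat} {ts : List N}
    (hfeats : it.feats = itemFeats Bs c ts) {B : Cat × List N} (hB : B ∈ Bs) :
    ∃ Nn : N, Sum.inl Nn ∈ α ∧ P.IsBlockOf Nn B := by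
  obtain ⟨Bs₀, hfeats₀, hBs₀⟩ := h.exists_blocks
  exact hBs₀ B (itemFeats_inj_blocks (hfeats.symm.trans hfeats₀) ▸ hB)

lemma WordItemOf.rule_of_neg_mem (hOrd : P.OrdSpec ord) {A : N} {α : List (N ⊕ T)}
    {it : MGItem T Cat N} (h : P.WordItemOf ord A α it) {t : N}
    (ht : Feature.neg t ∈ it.feats) : (t, α) ∈ P.rules ∧ P.target t = P.target A := by
  have hord : t ∈ ord α (P.target A) := by cases h <;> simpa using ht
  exact ((hOrd α (P.target A)).2 t).mp hord |>.2

lemma WellShaped.rule_of_free (hWS : P.WellShaped) {X A : N} {α : List (N ⊕ T)}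
    (hX : P.Free X) (hA : (A, α) ∈ P.rules) (htarget : P.target A = P.target X) :
    (X, α) ∈ P.rules ∧ P.ruleCat (X, α) = P.target A := by
  have hrule := hWS.2.2.1 X hX (A, α) hA htarget
  exact ⟨hrule, (hWS.1 _ hrule).trans htarget.symm⟩

end PreppedCFG

/-- detection of CFG rules: let `itF` and `itX` be the word items of
the rules `A → φ` and `A' → χ` (with `𝒞_χ = target A'`). If one of the
selector-licensor blocks of `itF` equals `=𝒞_χ`, or equals `=𝒞_χ, +t` for a
licensee `−t` of `itX`, then some nonterminal `N` occurring in the word `φ`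
generates `χ`, i.e. `I` has the rule `N → χ # 𝒞_χ`. -/
theorem stmt12 {N T Cat : Type} (P : PreppedCFG N T Cat)
    (ord : List (N ⊕ T) → Cat → List N)
    (hWS : P.WellShaped) (hOrd : P.OrdSpec ord)
    (A A' : N) (φ χ : List (N ⊕ T)) (itF itX : MGItem T Cat N)
    (hF : PreppedCFG.WordItemOf P ord A φ itF)
    (hX : PreppedCFG.WordItemOf P ord A' χ itX)
    (Bs : List (Cat × List N)) (cφ : Cat) (ts : List N)
    (hfeats : itF.feats = itemFeats Bs cφ ts)
    (hblock : (P.target A', ([] : List N)) ∈ Bs ∨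
      ∃ t : N, (P.target A', [t]) ∈ Bs ∧ Feature.neg t ∈ itX.feats) :
    ∃ Nn : N, Sum.inl Nn ∈ φ ∧ (Nn, χ) ∈ P.rules ∧
      P.ruleCat (Nn, χ) = P.target A' := by
  obtain ⟨ls, hmem, hls⟩ : ∃ ls : List N, (P.target A', ls) ∈ Bs ∧
      (ls = [] ∨ ∃ t : N, ls = [t] ∧ Feature.neg t ∈ itX.feats) := by
    rcases hblock with hmem | ⟨t, hmem, ht⟩
    exacts [⟨[], hmem, Or.inl rfl⟩, ⟨[t], hmem, Or.inr ⟨t, rfl, ht⟩⟩]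
  obtain ⟨Nn, hNφ, hNblock⟩ := hF.exists_of_mem_blocks hfeats hmem
  refine ⟨Nn, hNφ, ?_⟩
  rcases hNblock with ⟨hfree, hB⟩ | ⟨-, hB⟩
  · simp only [Prod.mk.injEq] at hB
    exact hWS.rule_of_free hfree hX.rule_mem hB.1
  · simp only [Prod.mk.injEq] at hB
    obtain ⟨-, rfl⟩ := hB
    obtain ⟨t, ht, hneg⟩ := hls.resolve_left (List.cons_ne_nil _ _)
    obtain rfl : Nn = t := List.singleton_inj.mp ht
    obtain ⟨hrule, htarget⟩ := hX.rule_of_neg_mem hOrd hneg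
    exact ⟨hrule, (hWS.1 _ hrule).trans htarget⟩
end

section
/- (Lemma: category-recursions in MGs.) Let I be a category-recursion free CFG with categories and G the minimalist grammar constructed from I by Instructions 5–8. Let a be an item of G (lexical or derived) and b an item derived from a such that 𝒞(a) = 𝒞(b) and b is part of a legal derivation tree of G. Then b is an adapted derivation of a, i.e. every merger applied externally in the derivation from a to b is an adapter item (equivalently, the category remains 𝒞(a) at every intermediate step of the derivation from a to b). -/
/-!
Every derivable expression of the constructed grammar is anchored at a CFG rule `A → α`: its
head is what remains of the word item of that rule (possibly under adapters), and every licensee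
`-R` in its chain either comes from a rule `R → α` with `R` of the category of `A`, or has the
category of a nonterminal occurring in a sentential form derived from `α`. The only other
derivable expressions are lexical adapters, lexical left-restricted word items, and
left-restricted word items that have merged their complement but not yet checked `+Y`.
Category-recursion freeness re-anchors the latter: the licensee `-Y` they attract must come from
a rule `Y → α₀` with `α₀` the complement's right-hand side, since otherwise `α₀` would derive a
nonterminal of its own category.

Along the path from `a` to `b`, self-merges, moves and adapter merges keep the category `𝒞(a)`.
As soon as the path expression is selected by a word item, the anchor becomes a rule whose
right-hand side derives a nonterminal of category `𝒞(a)`, and this survives every later step; a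
final expression of category `𝒞(a)` anchored at such a rule is a category recursion.
-/

theorem CFGProduces.append {N T : Type} {rules : Set (N × List (N ⊕ T))} {u v : List (N ⊕ T)}
    (h : CFGProduces rules u v) (p s : List (N ⊕ T)) :
    CFGProduces rules (p ++ u ++ s) (p ++ v ++ s) := by
  obtain ⟨A, γ, p', s', hr, rfl, rfl⟩ := h
  exact ⟨A, γ, p ++ p', s' ++ s, hr, by simp, by simp⟩

theorem CFGDerives.append {N T : Type} {rules : Set (N × List (N ⊕ T))} {u v : List (N ⊕ T)}
    (h : CFGDerives rules u v) (p s : List (N ⊕ T)) :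
    CFGDerives rules (p ++ u ++ s) (p ++ v ++ s) :=
  Relation.ReflTransGen.lift (fun w => p ++ w ++ s) (fun _ _ h => h.append p s) u v h

section Minimalist

variable {T C L : Type}

theorem MergeStep.shape {A B F : MGExpr T C L} (h : MergeStep A B F) :
    ∃ f t, A.1.feats = Feature.sel f :: F.1.feats ∧ B.1.feats = Feature.cat f :: t ∧
      ∀ k ∈ F.2, k ∈ A.2 ∨ k ∈ B.2 ∨ k.feats = t := by
  cases h <;> refine ⟨_, _, rfl, rfl, fun k hk => ?_⟩ <;> simp at hk <;> aesop

theorem MoveStep.shape {A F : MGExpr T C L} (h : MoveStep A F) :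
    ∃ f t k₀, A.1.feats = Feature.pos f :: F.1.feats ∧ k₀ ∈ A.2 ∧
      k₀.feats = Feature.neg f :: t ∧ ∀ k ∈ F.2, k ∈ A.2 ∨ k.feats = t := by
  cases h with
  | move1 e₁ e₂ f t b q₁ q₂ =>
    refine ⟨f, [], ⟨e₂, b, [Feature.neg f]⟩, rfl, by simp, rfl, fun k hk => ?_⟩
    simp only [List.mem_append, List.mem_cons] at hk ⊢
    tauto
  | move2 e₁ e₂ f t t₂ b q₁ q₂ =>
    refine ⟨f, t₂, ⟨e₂, b, Feature.neg f :: t₂⟩, rfl, by simp, rfl, fun k hk => ?_⟩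
    simp only [List.mem_append, List.mem_cons] at hk
    rcases hk with hk | rfl | hk <;> simp_all

theorem MergeStep.cat_mem {A B F : MGExpr T C L} {c : C} (h : MergeStep A B F)
    (hc : Feature.cat c ∈ A.1.feats) : Feature.cat c ∈ F.1.feats := by
  obtain ⟨f, -, hA, -⟩ := h.shape
  exact List.mem_of_ne_of_mem (by simp) (hA ▸ hc)

theorem MoveStep.cat_mem {A F : MGExpr T C L} {c : C} (h : MoveStep A F)
    (hc : Feature.cat c ∈ A.1.feats) : Feature.cat c ∈ F.1.feats := by
  obtain ⟨f, -, -, hA, -⟩ := h.shape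
  exact List.mem_of_ne_of_mem (by simp) (hA ▸ hc)

theorem MGDeriv.of_derivedFrom {lex : Set (MGItem T C L)} {E F : MGExpr T C L}
    (hE : MGDeriv lex E) (h : DerivedFrom lex E F) : MGDeriv lex F := by
  induction h with
  | refl => exact hE
  | tail _ hstep ih =>
    rcases hstep with ⟨B, hB, h⟩ | ⟨M, hM, h⟩ | h
    · exact .merge ih hB h
    · exact .merge hM ih h
    · exact .move ih h

theorem MoveStep.exists_of_derivedFrom {lex : Set (MGItem T C L)} {E : MGExpr T C L}
    {e : List T} {b : Bool} {c : C} {f : L} {t : List (Feature C L)}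
    (h : DerivedFrom lex E (⟨e, b, [Feature.cat c]⟩, [])) (hE : E.1.feats = Feature.pos f :: t) :
    ∃ F, MoveStep E F := by
  rcases Relation.ReflTransGen.cases_head h with rfl | ⟨F, hstep, -⟩
  · cases hE
  · rcases hstep with ⟨B, -, h⟩ | ⟨M, -, h⟩ | h
    · obtain ⟨_, _, hE', -⟩ := h.shape
      cases hE.symm.trans hE'
    · obtain ⟨_, _, -, hE', -⟩ := h.shape
      cases hE.symm.trans hE'
    · exact ⟨F, h⟩

end Minimalist

namespace PreppedCFG

variable {N T Cat : Type}

section Invariants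

variable (P : PreppedCFG N T Cat)

def ReachesCat (α : List (N ⊕ T)) (c : Cat) : Prop :=
  ∃ ω B β, CFGDerives P.rules α ω ∧ Sum.inl B ∈ ω ∧ (B, β) ∈ P.rules ∧ P.target B = c

def Licensed (α : List (N ⊕ T)) (c : Cat) (R : N) : Prop :=
  ((R, α) ∈ P.rules ∧ P.target R = c) ∨ P.ReachesCat α (P.target R)

def LicensedFeats (α : List (N ⊕ T)) (c : Cat) (fs : List (Feature Cat N)) : Prop :=
  ∀ x ∈ fs, ∃ R, x = Feature.neg R ∧ P.Licensed α c R

/-- The licensors `+R` in the prefix come from adapters; the licensees `-R` they introduce on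
the head are licensed once `+R` has been checked. -/
def Anchored (E : MGExpr T Cat N) (A : N) (α : List (N ⊕ T)) : Prop :=
  (A, α) ∈ P.rules ∧
  ∃ (pre : List (Feature Cat N)) (hs : List N),
    E.1.feats = pre ++ Feature.cat (P.target A) :: hs.map Feature.neg ∧
    (∀ x ∈ pre, (∃ S, x = Feature.sel (P.target S) ∧ Sum.inl S ∈ α ∧ P.Free S) ∨
      ∃ R, x = Feature.pos R) ∧
    (∀ R ∈ hs, P.Licensed α (P.target A) R ∨ Feature.pos R ∈ pre) ∧
    ∀ k ∈ E.2, P.LicensedFeats α (P.target A) k.feats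

/-- A left-restricted word item of the rule `A → α`, with `Y ∈ α`, after merging a complement
anchored at `A₀ → α₀`, before checking `+Y`. -/
def AwaitsMove (E : MGExpr T Cat N) (A₀ : N) (α₀ : List (N ⊕ T)) (A : N) (α : List (N ⊕ T))
    (Y : N) : Prop :=
  (A₀, α₀) ∈ P.rules ∧ (A, α) ∈ P.rules ∧ Sum.inl Y ∈ α ∧ P.target Y = P.target A₀ ∧
  ∃ hs : List N, E.1.feats = Feature.pos Y :: Feature.cat (P.target A) :: hs.map Feature.neg ∧
    (∀ R ∈ hs, P.Licensed α (P.target A) R) ∧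
    ∀ k ∈ E.2, P.LicensedFeats α₀ (P.target A₀) k.feats

def LexLeftRestricted (it : MGItem T Cat N) : Prop :=
  ∃ A α Y, ∃ hs : List N, (A, α) ∈ P.rules ∧ Sum.inl Y ∈ α ∧
    (∀ R ∈ hs, P.Licensed α (P.target A) R) ∧
    it.feats = Feature.sel (P.target Y) :: Feature.pos Y :: Feature.cat (P.target A) ::
      hs.map Feature.neg

def DerivInvariant (ord : List (N ⊕ T) → Cat → List N) (E : MGExpr T Cat N) : Prop :=
  (∃ A α, P.Anchored E A α) ∨ (∃ A₀ α₀ A α Y, P.AwaitsMove E A₀ α₀ A α Y) ∨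
  (∃ it, E = (it, []) ∧ P.IsAdapter ord it) ∨ ∃ it, E = (it, []) ∧ P.LexLeftRestricted it

def AnchoredAbove (E : MGExpr T Cat N) (c : Cat) : Prop :=
  (∃ A α, P.Anchored E A α ∧ P.ReachesCat α c) ∨
  ∃ A₀ α₀ A α Y, P.AwaitsMove E A₀ α₀ A α Y ∧ (P.target Y = c ∨ P.ReachesCat α₀ c)

def AdaptedOrAbove (ord : List (N ⊕ T) → Cat → List N) (a : MGExpr T Cat N) (c : Cat)
    (E : MGExpr T Cat N) : Prop :=
  (AdaptedFrom (P.MGLex ord) {it | P.IsAdapter ord it} a E ∧ Feature.cat c ∈ E.1.feats) ∨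
  P.AnchoredAbove E c

end Invariants

variable {P : PreppedCFG N T Cat} {ord : List (N ⊕ T) → Cat → List N}

theorem reachesCat_of_mem {S : N} {α β : List (N ⊕ T)} {c : Cat} (hr : (S, β) ∈ P.rules)
    (hS : Sum.inl S ∈ α) (h : P.target S = c ∨ P.ReachesCat β c) : P.ReachesCat α c := by
  rcases h with h | ⟨ω, B, γ, hd, hB, hγ, hc⟩
  · exact ⟨α, S, β, Relation.ReflTransGen.refl, hS, hr, h⟩
  · obtain ⟨p, s, rfl⟩ := List.append_of_mem hS
    exact ⟨p ++ ω ++ s, B, γ, Relation.ReflTransGen.head ⟨S, β, p, s, hr, rfl, rfl⟩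
      (hd.append p s), by simp [hB], hγ, hc⟩

theorem not_reachesCat (hWS : P.WellShaped) (hCRF : P.CatRecFree) {A : N} {α : List (N ⊕ T)}
    (hr : (A, α) ∈ P.rules) : ¬ P.ReachesCat α (P.target A) := by
  rintro ⟨ω, B, β, hd, hB, hβ, hc⟩
  exact hCRF.2 (A, α) hr ω hd B hB (B, β) hβ rfl (by rw [hWS.1 _ hβ, hWS.1 _ hr]; exact hc)

theorem Licensed.reanchor {S R : N} {α β : List (N ⊕ T)} {c c' : Cat} (h : P.Licensed β c' R)
    (hr : (S, β) ∈ P.rules) (hS : Sum.inl S ∈ α) (hc : P.target S = c') : P.Licensed α c R :=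
  Or.inr <| reachesCat_of_mem hr hS <| h.imp (fun h => hc.trans h.2.symm) id

theorem LicensedFeats.reanchor {S : N} {α β : List (N ⊕ T)} {c c' : Cat}
    {fs : List (Feature Cat N)} (h : P.LicensedFeats β c' fs) (hr : (S, β) ∈ P.rules)
    (hS : Sum.inl S ∈ α) (hc : P.target S = c') : P.LicensedFeats α c fs :=
  fun x hx => (h x hx).imp fun _ ⟨hx, hR⟩ => ⟨hx, hR.reanchor hr hS hc⟩

theorem licensed_of_moveStep {E F : MGExpr T Cat N} {α : List (N ⊕ T)} {c : Cat}
    (hch : ∀ k ∈ E.2, P.LicensedFeats α c k.feats) (h : MoveStep E F) :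
    ∃ f, E.1.feats = Feature.pos f :: F.1.feats ∧ P.Licensed α c f ∧
      ∀ k ∈ F.2, P.LicensedFeats α c k.feats := by
  obtain ⟨f, t, k₀, hE, hk₀, hk₀f, hF⟩ := h.shape
  have hk₀ : P.LicensedFeats α c (Feature.neg f :: t) := hk₀f ▸ hch k₀ hk₀
  refine ⟨f, hE, ?_, fun k hk => ?_⟩
  · obtain ⟨R, hR, hlic⟩ := hk₀ _ List.mem_cons_self
    cases hR
    exact hlic
  · rcases hF k hk with hk | hk
    · exact hch k hk
    · exact hk ▸ fun x hx => hk₀ x (List.mem_cons_of_mem _ hx)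

section Anchored

variable {E F B M : MGExpr T Cat N} {A : N} {α : List (N ⊕ T)}

theorem Anchored.chain (hE : P.Anchored E A α) :
    ∀ k ∈ E.2, P.LicensedFeats α (P.target A) k.feats := by
  obtain ⟨-, -, -, -, -, -, h⟩ := hE
  exact h

theorem Anchored.cat_mem (hE : P.Anchored E A α) : Feature.cat (P.target A) ∈ E.1.feats := by
  obtain ⟨-, pre, hs, hfe, -⟩ := hE
  simp [hfe]

theorem Anchored.cat_eq {c : Cat} (hE : P.Anchored E A α) (hc : Feature.cat c ∈ E.1.feats) :
    c = P.target A := by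
  obtain ⟨-, pre, hs, hfe, hpre, -⟩ := hE
  simp only [hfe, List.mem_append, List.mem_cons, List.mem_map] at hc
  rcases hc with hc | hc | ⟨R, -, hR⟩
  · rcases hpre _ hc with ⟨S, h, -⟩ | ⟨R, h⟩ <;> cases h
  · injection hc
  · cases hR

theorem Anchored.not_reachesCat (hWS : P.WellShaped) (hCRF : P.CatRecFree) {c : Cat}
    (hE : P.Anchored E A α) (hc : Feature.cat c ∈ E.1.feats) : ¬ P.ReachesCat α c :=
  hE.cat_eq hc ▸ PreppedCFG.not_reachesCat hWS hCRF hE.1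

theorem Anchored.mergee {f : Cat} {t : List (Feature Cat N)} (hE : P.Anchored E A α)
    (hf : E.1.feats = Feature.cat f :: t) :
    f = P.target A ∧ P.LicensedFeats α (P.target A) t := by
  obtain ⟨-, pre, hs, hfe, hpre, hhs, -⟩ := hE
  rw [hfe] at hf
  cases pre with
  | cons x pre =>
    obtain ⟨rfl, -⟩ := List.cons.inj hf
    rcases hpre _ List.mem_cons_self with ⟨S, h, -⟩ | ⟨R, h⟩ <;> cases h
  | nil =>
    simp only [List.nil_append, List.cons.injEq, Feature.cat.injEq] at hf
    obtain ⟨rfl, rfl⟩ := hf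
    refine ⟨rfl, fun x hx => ?_⟩
    obtain ⟨R, hR, rfl⟩ := List.mem_map.1 hx
    exact ⟨R, rfl, (hhs R hR).resolve_right List.not_mem_nil⟩

theorem Anchored.exists_sel {f : Cat} {t : List (Feature Cat N)} (hE : P.Anchored E A α)
    (hf : E.1.feats = Feature.sel f :: t) :
    ∃ S, P.target S = f ∧ Sum.inl S ∈ α ∧ P.Free S := by
  obtain ⟨-, pre, hs, hfe, hpre, -⟩ := hE
  rw [hfe] at hf
  cases pre with
  | nil => cases hf
  | cons x pre =>
    obtain ⟨rfl, -⟩ := List.cons.inj hf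
    rcases hpre _ List.mem_cons_self with ⟨S, h, hS, hfree⟩ | ⟨R, h⟩ <;> cases h
    exact ⟨S, rfl, hS, hfree⟩

theorem Anchored.of_cons {x : Feature Cat N} (hE : P.Anchored E A α)
    (hx : E.1.feats = x :: F.1.feats) (hcat : ∀ c, x ≠ Feature.cat c)
    (hpos : ∀ R, x = Feature.pos R → P.Licensed α (P.target A) R)
    (hch : ∀ k ∈ F.2, P.LicensedFeats α (P.target A) k.feats) : P.Anchored F A α := by
  obtain ⟨hr, pre, hs, hfe, hpre, hhs, -⟩ := hE
  rw [hfe] at hx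
  cases pre with
  | nil => exact absurd (List.cons.inj hx).1.symm (hcat _)
  | cons y pre =>
    obtain ⟨rfl, hF⟩ := List.cons.inj hx
    refine ⟨hr, pre, hs, hF.symm, fun z hz => hpre z (List.mem_cons_of_mem _ hz),
      fun R hR => ?_, hch⟩
    rcases hhs R hR with h | h
    · exact Or.inl h
    · rcases List.mem_cons.1 h with h | h
      · exact Or.inl (hpos R h.symm)
      · exact Or.inr h

theorem Anchored.mergeStep (hB : P.Anchored B A α) (h : MergeStep M B F) :
    M.1.feats = Feature.sel (P.target A) :: F.1.feats ∧
      ∀ k ∈ F.2, k ∈ M.2 ∨ P.LicensedFeats α (P.target A) k.feats := by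
  obtain ⟨f, t, hM, hBf, hF⟩ := h.shape
  obtain ⟨rfl, ht⟩ := hB.mergee hBf
  refine ⟨hM, fun k hk => ?_⟩
  rcases hF k hk with hk | hk | hk
  · exact Or.inl hk
  · exact Or.inr (hB.chain k hk)
  · exact Or.inr (hk ▸ ht)

theorem Anchored.merge (hWS : P.WellShaped) {Am : N} {αm : List (N ⊕ T)}
    (hM : P.Anchored M Am αm) (hB : P.Anchored B A α) (h : MergeStep M B F) :
    P.Anchored F Am αm ∧ ∃ S, Sum.inl S ∈ αm ∧ (S, α) ∈ P.rules ∧ P.target S = P.target A := by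
  obtain ⟨hMf, hF⟩ := hB.mergeStep h
  obtain ⟨S, hSA, hS, hfree⟩ := hM.exists_sel hMf
  have hSr : (S, α) ∈ P.rules := hWS.2.2.1 S hfree (A, α) hB.1 hSA.symm
  refine ⟨hM.of_cons hMf (fun _ h => by cases h) (fun _ h => by cases h) fun k hk => ?_,
    S, hS, hSr, hSA⟩
  rcases hF k hk with hk | hk
  · exact hM.chain k hk
  · exact hk.reanchor hSr hS hSA

theorem Anchored.move (hE : P.Anchored E A α) (h : MoveStep E F) : P.Anchored F A α := by
  obtain ⟨f, hEf, hf, hch⟩ := licensed_of_moveStep hE.chain h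
  exact hE.of_cons hEf (fun _ h => by cases h) (fun _ h => by cases h; exact hf) hch

end Anchored

section Invariant

variable {E F B M : MGExpr T Cat N} {A A₀ Y : N} {α α₀ : List (N ⊕ T)}

theorem AwaitsMove.feats_eq (hE : P.AwaitsMove E A₀ α₀ A α Y) :
    ∃ t, E.1.feats = Feature.pos Y :: t := by
  obtain ⟨-, -, -, -, hs, hfe, -⟩ := hE
  exact ⟨_, hfe⟩

theorem AwaitsMove.move (hWS : P.WellShaped) (hCRF : P.CatRecFree)
    (hE : P.AwaitsMove E A₀ α₀ A α Y) (h : MoveStep E F) :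
    (Y, α₀) ∈ P.rules ∧ P.Anchored F A α := by
  obtain ⟨hr₀, hr, hY, hYA₀, hs, hEf, hhs, hch⟩ := hE
  obtain ⟨f, hf, hlic, hFch⟩ := licensed_of_moveStep hch h
  rw [hEf] at hf
  obtain ⟨hfY, hFf⟩ := List.cons.inj hf
  cases hfY
  -- The licensee `-Y` cannot come from deeper down: that would be a category recursion at `A₀`.
  have hYr : (Y, α₀) ∈ P.rules := by
    rcases hlic with h | h
    · exact h.1
    · exact absurd (hYA₀ ▸ h) (not_reachesCat hWS hCRF hr₀)
  exact ⟨hYr, hr, [], hs, hFf.symm, by simp, fun R hR => Or.inl (hhs R hR),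
    fun k hk => (hFch k hk).reanchor hYr hY hYA₀⟩

theorem IsAdapter.exists_feats {it : MGItem T Cat N} (h : P.IsAdapter ord it) :
    ∃ (c : Cat) (ys hs : List N), it.feats = Feature.sel c ::
      (ys.map Feature.pos ++ Feature.cat c :: hs.map Feature.neg) ∧ ∀ R ∈ hs, R ∈ ys := by
  rcases h with ⟨c, a, -, rfl⟩ | ⟨c, x, t, -, -, rfl⟩
  · exact ⟨c, [a], [], rfl, by simp⟩
  · exact ⟨c, x :: t, [x], by simp, by simp⟩

theorem IsAdapter.merge {it : MGItem T Cat N} (hit : P.IsAdapter ord it)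
    (hB : P.Anchored B A α) (h : MergeStep (it, []) B F) : P.Anchored F A α := by
  obtain ⟨hMf, hF⟩ := hB.mergeStep h
  obtain ⟨c, ys, hs, hit, hhs⟩ := hit.exists_feats
  obtain ⟨hc, hFf⟩ := List.cons.inj (hit.symm.trans hMf)
  cases hc
  refine ⟨hB.1, _, hs, hFf.symm, fun x hx => ?_, fun R hR => Or.inr ?_,
    fun k hk => (hF k hk).resolve_left List.not_mem_nil⟩
  · obtain ⟨R, -, rfl⟩ := List.mem_map.1 hx
    exact Or.inr ⟨R, rfl⟩
  · exact List.mem_map_of_mem (hhs R hR)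

theorem LexLeftRestricted.merge {it : MGItem T Cat N} (hit : P.LexLeftRestricted it)
    (hB : P.Anchored B A₀ α₀) (h : MergeStep (it, []) B F) :
    ∃ A α Y, P.AwaitsMove F A₀ α₀ A α Y := by
  obtain ⟨hMf, hF⟩ := hB.mergeStep h
  obtain ⟨A, α, Y, hs, hr, hY, hhs, hit⟩ := hit
  obtain ⟨hc, hFf⟩ := List.cons.inj (hit.symm.trans hMf)
  exact ⟨A, α, Y, hB.1, hr, hY, Feature.sel.inj hc, hs, hFf.symm, hhs,
    fun k hk => (hF k hk).resolve_left List.not_mem_nil⟩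

theorem DerivInvariant.anchored_of_cat {f : Cat} {t : List (Feature Cat N)}
    (hE : P.DerivInvariant ord E) (hf : E.1.feats = Feature.cat f :: t) :
    ∃ A α, P.Anchored E A α := by
  rcases hE with hE | ⟨_, _, _, _, _, hE⟩ | ⟨it, rfl, hit⟩ | ⟨it, rfl, _, _, _, _, -, -, -, hit⟩
  · exact hE
  · obtain ⟨_, hEf⟩ := hE.feats_eq
    cases hf.symm.trans hEf
  · obtain ⟨_, _, _, hit, -⟩ := hit.exists_feats
    cases hf.symm.trans hit
  · cases hf.symm.trans hit

theorem DerivInvariant.merge (hWS : P.WellShaped) (hM : P.DerivInvariant ord M)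
    (hB : P.Anchored B A α) (h : MergeStep M B F) :
    (∃ Am αm S, P.Anchored F Am αm ∧ Sum.inl S ∈ αm ∧ (S, α) ∈ P.rules ∧
      P.target S = P.target A) ∨
    ((∃ it, M = (it, []) ∧ P.IsAdapter ord it) ∧ P.Anchored F A α) ∨
    ∃ Am αm Y, P.AwaitsMove F A α Am αm Y := by
  rcases hM with ⟨Am, αm, hM⟩ | ⟨_, _, _, _, _, hM⟩ | ⟨it, rfl, hit⟩ | ⟨it, rfl, hit⟩
  · obtain ⟨hF, S, hS⟩ := hM.merge hWS hB h
    exact Or.inl ⟨Am, αm, S, hF, hS⟩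
  · obtain ⟨_, hMf⟩ := hM.feats_eq
    cases hMf.symm.trans (hB.mergeStep h).1
  · exact Or.inr (Or.inl ⟨⟨it, rfl, hit⟩, hit.merge hB h⟩)
  · exact Or.inr (Or.inr (hit.merge hB h))

theorem DerivInvariant.move (hWS : P.WellShaped) (hCRF : P.CatRecFree)
    (hE : P.DerivInvariant ord E) (h : MoveStep E F) : P.DerivInvariant ord F := by
  obtain ⟨_, _, k₀, -, hk₀, -⟩ := h.shape
  rcases hE with ⟨A, α, hE⟩ | ⟨A₀, α₀, A, α, Y, hE⟩ | ⟨it, rfl, -⟩ | ⟨it, rfl, -⟩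
  · exact Or.inl ⟨A, α, hE.move h⟩
  · exact Or.inl ⟨A, α, (hE.move hWS hCRF h).2⟩
  · cases hk₀
  · cases hk₀

theorem anchored_wordItem (hOrd : P.OrdSpec ord) (hr : (A, α) ∈ P.rules)
    {pre : List (Feature Cat N)}
    (hpre : ∀ x ∈ pre, ∃ S, x = Feature.sel (P.target S) ∧ Sum.inl S ∈ α ∧ P.Free S)
    (w : List T) :
    P.Anchored (⟨w, true, pre ++ Feature.cat (P.target A) ::
      (ord α (P.target A)).map Feature.neg⟩, []) A α :=
  ⟨hr, pre, _, rfl, fun x hx => Or.inl (hpre x hx),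
    fun R hR => Or.inl (Or.inl ((hOrd α _).2 R |>.1 hR).2), by simp⟩

theorem derivInvariant_of_mem_lex (hOrd : P.OrdSpec ord) {it : MGItem T Cat N}
    (hit : it ∈ P.MGLex ord) : P.DerivInvariant ord (it, []) := by
  rcases hit with ⟨A, α, hw⟩ | hit
  · cases hw with
    | terminal w h => exact Or.inl ⟨A, _, anchored_wordItem hOrd h (pre := []) (by simp) w⟩
    | rightFree w X hX h =>
      exact Or.inl ⟨A, _, anchored_wordItem hOrd h (pre := [Feature.sel (P.target X)])
        (fun x hx => ⟨X, List.mem_singleton.1 hx, by simp, hX⟩) w⟩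
    | leftRestricted Y w hY h =>
      exact Or.inr (Or.inr (Or.inr ⟨_, rfl, A, _, Y, _, h, by simp,
        fun R hR => Or.inl ((hOrd _ _).2 R |>.1 hR).2, rfl⟩))
    | twoHanded Y X w hY hX h =>
      refine Or.inl ⟨A, _, anchored_wordItem hOrd h
        (pre := [Feature.sel (P.target X), Feature.sel (P.target Y)]) ?_ w⟩
      simp only [List.mem_cons, List.not_mem_nil, or_false]
      rintro x (rfl | rfl)
      · exact ⟨X, rfl, by simp, hX⟩
      · exact ⟨Y, rfl, by simp, hY⟩
  · exact Or.inr (Or.inr (Or.inl ⟨it, rfl, hit⟩))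

theorem derivInvariant_of_mgDeriv (hWS : P.WellShaped) (hOrd : P.OrdSpec ord)
    (hCRF : P.CatRecFree) (h : MGDeriv (P.MGLex ord) E) : P.DerivInvariant ord E := by
  induction h with
  | ax hi => exact derivInvariant_of_mem_lex hOrd hi
  | merge _ _ h ihM ihB =>
    obtain ⟨f, t, -, hBf, -⟩ := h.shape
    obtain ⟨A, α, hB⟩ := ihB.anchored_of_cat hBf
    rcases ihM.merge hWS hB h with ⟨_, _, _, hF, -⟩ | ⟨-, hF⟩ | ⟨_, _, _, hF⟩
    · exact Or.inl ⟨_, _, hF⟩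
    · exact Or.inl ⟨_, _, hF⟩
    · exact Or.inr (Or.inl ⟨_, _, _, _, _, hF⟩)
  | move _ h ih => exact ih.move hWS hCRF h

end Invariant

section Path

variable {a E F : MGExpr T Cat N} {c : Cat}

theorem AdaptedOrAbove.merger (hWS : P.WellShaped) (hOrd : P.OrdSpec ord)
    (hCRF : P.CatRecFree) {B : MGExpr T Cat N} (hE : P.AdaptedOrAbove ord a c E)
    (hB : MGDeriv (P.MGLex ord) B) (h : MergeStep E B F) : P.AdaptedOrAbove ord a c F := by
  obtain ⟨f, t, hEf, hBf, -⟩ := h.shape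
  obtain ⟨A', α', hBA⟩ := (derivInvariant_of_mgDeriv hWS hOrd hCRF hB).anchored_of_cat hBf
  rcases hE with ⟨hAd, hc⟩ | ⟨A, α, hEA, hα⟩ | ⟨_, _, _, _, _, hE, -⟩
  · exact Or.inl ⟨.selfMerge hAd hB h, h.cat_mem hc⟩
  · exact Or.inr (Or.inl ⟨A, α, (hEA.merge hWS hBA h).1, hα⟩)
  · obtain ⟨_, hEf'⟩ := hE.feats_eq
    cases hEf.symm.trans hEf'

theorem AdaptedOrAbove.mergee (hWS : P.WellShaped) (hOrd : P.OrdSpec ord)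
    (hCRF : P.CatRecFree) {M : MGExpr T Cat N} (hE : P.AdaptedOrAbove ord a c E)
    (hEd : MGDeriv (P.MGLex ord) E) (hM : MGDeriv (P.MGLex ord) M) (h : MergeStep M E F) :
    P.AdaptedOrAbove ord a c F := by
  obtain ⟨f, t, -, hEf, -⟩ := h.shape
  obtain ⟨A, α, hEA, hside⟩ : ∃ A α, P.Anchored E A α ∧
      ((AdaptedFrom (P.MGLex ord) {it | P.IsAdapter ord it} a E ∧ P.target A = c) ∨
        P.ReachesCat α c) := by
    rcases hE with ⟨hAd, hc⟩ | ⟨A, α, hEA, hα⟩ | ⟨_, _, _, _, _, hE, -⟩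
    · obtain ⟨A, α, hEA⟩ := (derivInvariant_of_mgDeriv hWS hOrd hCRF hEd).anchored_of_cat hEf
      exact ⟨A, α, hEA, Or.inl ⟨hAd, (hEA.cat_eq hc).symm⟩⟩
    · exact ⟨A, α, hEA, Or.inr hα⟩
    · obtain ⟨_, hEf'⟩ := hE.feats_eq
      cases hEf.symm.trans hEf'
  rcases (derivInvariant_of_mgDeriv hWS hOrd hCRF hM).merge hWS hEA h with
    ⟨Am, αm, S, hF, hS, hSr, hSA⟩ | ⟨⟨it, rfl, hit⟩, hF⟩ | ⟨Am, αm, Y, hF⟩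
  · exact Or.inr (Or.inl ⟨Am, αm, hF,
      reachesCat_of_mem hSr hS (hside.imp (fun h => hSA.trans h.2) id)⟩)
  · rcases hside with ⟨hAd, hc⟩ | hα
    · exact Or.inl ⟨.adapterMerge hit hAd h, hc ▸ hF.cat_mem⟩
    · exact Or.inr (Or.inl ⟨A, α, hF, hα⟩)
  · exact Or.inr (Or.inr ⟨A, α, Am, αm, Y, hF,
      hside.imp (fun h => hF.2.2.2.1.trans h.2) id⟩)

theorem AdaptedOrAbove.move (hWS : P.WellShaped) (hCRF : P.CatRecFree)
    (hE : P.AdaptedOrAbove ord a c E) (h : MoveStep E F) : P.AdaptedOrAbove ord a c F := by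
  rcases hE with ⟨hAd, hc⟩ | ⟨A, α, hEA, hα⟩ | ⟨A₀, α₀, A, α, Y, hE, hα⟩
  · exact Or.inl ⟨.move hAd h, h.cat_mem hc⟩
  · exact Or.inr (Or.inl ⟨A, α, hEA.move h, hα⟩)
  · obtain ⟨hYr, hF⟩ := hE.move hWS hCRF h
    exact Or.inr (Or.inl ⟨A, α, hF, reachesCat_of_mem hYr hE.2.2.1 hα⟩)

theorem adaptedOrAbove_of_derivedFrom (hWS : P.WellShaped) (hOrd : P.OrdSpec ord)
    (hCRF : P.CatRecFree) (ha : MGDeriv (P.MGLex ord) a) (hc : Feature.cat c ∈ a.1.feats)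
    (h : DerivedFrom (P.MGLex ord) a E) : P.AdaptedOrAbove ord a c E := by
  induction h with
  | refl => exact Or.inl ⟨.refl a, hc⟩
  | tail hE hstep ih =>
    rcases hstep with ⟨B, hB, h⟩ | ⟨M, hM, h⟩ | h
    · exact ih.merger hWS hOrd hCRF hB h
    · exact ih.mergee hWS hOrd hCRF (ha.of_derivedFrom hE) hM h
    · exact ih.move hWS hCRF h

theorem AdaptedOrAbove.adaptedFrom (hWS : P.WellShaped) (hCRF : P.CatRecFree)
    {e : List T} {b : Bool} {c' : Cat} (hE : P.AdaptedOrAbove ord a c E)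
    (hfin : DerivedFrom (P.MGLex ord) E (⟨e, b, [Feature.cat c']⟩, []))
    (hc : Feature.cat c ∈ E.1.feats) :
    AdaptedFrom (P.MGLex ord) {it | P.IsAdapter ord it} a E := by
  rcases hE with ⟨hAd, -⟩ | ⟨A, α, hEA, hα⟩ | ⟨A₀, α₀, A, α, Y, hE, hα⟩
  · exact hAd
  · exact absurd hα (hEA.not_reachesCat hWS hCRF hc)
  · -- `E` still has to check `+Y` on its way to the final expression.
    obtain ⟨_, hEf⟩ := hE.feats_eq
    obtain ⟨F, h⟩ := MoveStep.exists_of_derivedFrom hfin hEf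
    obtain ⟨hYr, hF⟩ := hE.move hWS hCRF h
    exact absurd (reachesCat_of_mem hYr hE.2.2.1 hα) (hF.not_reachesCat hWS hCRF (h.cat_mem hc))

end Path

end PreppedCFG

/-- category-recursions in MGs: let `I` be category-recursion free,
`a` an item of the constructed MG and `b` an item derived from `a` with
`𝒞(a) = 𝒞(b)` which is part of a legal derivation tree. Then `b` is an adapted
derivation of `a`. -/
theorem stmt13 {N T Cat : Type} (P : PreppedCFG N T Cat)
    (ord : List (N ⊕ T) → Cat → List N)
    (hWS : P.WellShaped) (hOrd : P.OrdSpec ord) (hCRF : P.CatRecFree)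
    (a b : MGExpr T Cat N)
    (ha : MGDeriv (P.MGLex ord) a)
    (hder : DerivedFrom (P.MGLex ord) a b)
    (hleg : InLegalTree (P.MGLex ord) P.CFin b)
    (hcat : ∃ c : Cat, Feature.cat c ∈ a.1.feats ∧ Feature.cat c ∈ b.1.feats) :
    AdaptedFrom (P.MGLex ord) {it | P.IsAdapter ord it} a b := by
  obtain ⟨c, hca, hcb⟩ := hcat
  obtain ⟨-, e, bb, hfin⟩ := hleg
  exact (P.adaptedOrAbove_of_derivedFrom hWS hOrd hCRF ha hca hder).adaptedFrom hWS hCRF hfin hcb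
end
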